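/- arXiv:2502.09353 — 10 statements merged into one kernel-verified Lean document; each statement's English description precedes it below -/
import Mathlib

section
/- Let n ≥ 3 and let C : ZMod n → EuclideanSpace ℝ (Fin 2) be a closed polygon with C(i+1) ≠ C(i) for all i, and suppose that at no vertex the direction is reversed, i.e. for every i the oriented angle (with respect to the standard orientation of the plane) from the edge vector e_{i-1} = C(i) − C(i−1) to e_i = C(i+1) − C(i) is not equal to π. Then there exists an integer k such that ∑_{i ∈ ZMod n} θ_i = 2πk, where θ_i ∈ (−π, π) is the real representative of the oriented angle from e_{i−1} to e_i. -/
/-!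
Measuring every edge direction against one fixed edge, each turning angle becomes a difference
of two consecutive absolute directions in `Real.Angle = ℝ / 2πℤ`, so the turning angles sum to
`0` there. Hence their real representatives sum to an integer multiple of `2π`.
-/

open scoped RealInnerProductSpace

noncomputable instance : Fact (Module.finrank ℝ (EuclideanSpace ℝ (Fin 2)) = 2) :=
  ⟨finrank_euclideanSpace_fin⟩

/-- The standard orientation of the Euclidean plane. -/
noncomputable def stdOrientation : Orientation ℝ (EuclideanSpace ℝ (Fin 2)) (Fin 2) :=
  (EuclideanSpace.basisFun (Fin 2) ℝ).toBasis.orientation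

theorem Orientation.sum_oangle_perm_eq_zero {V : Type*} [NormedAddCommGroup V]
    [InnerProductSpace ℝ V] [Fact (Module.finrank ℝ V = 2)] (o : Orientation ℝ V (Fin 2))
    {ι : Type*} [Fintype ι] (σ : Equiv.Perm ι) {e : ι → V} (he : ∀ i, e i ≠ 0) :
    ∑ i, o.oangle (e (σ i)) (e i) = 0 := by
  cases isEmpty_or_nonempty ι
  · exact Finset.sum_of_isEmpty _
  obtain ⟨j⟩ := ‹Nonempty ι›
  have hdiff : ∀ i, o.oangle (e (σ i)) (e i) = o.oangle (e j) (e i) - o.oangle (e j) (e (σ i)) :=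
    fun i => (o.oangle_sub_left (he j) (he (σ i)) (he i)).symm
  rw [Finset.sum_congr rfl fun i _ => hdiff i, Finset.sum_sub_distrib,
    Equiv.sum_comp σ fun i => o.oangle (e j) (e i), sub_self]

theorem Real.Angle.exists_sum_toReal_eq_two_pi_mul_of_sum_eq_zero {ι : Type*} (s : Finset ι)
    {θ : ι → Real.Angle} (hθ : ∑ i ∈ s, θ i = 0) :
    ∃ k : ℤ, ∑ i ∈ s, (θ i).toReal = 2 * Real.pi * k := by
  have hcoe : ((∑ i ∈ s, (θ i).toReal : ℝ) : Real.Angle) = 0 := by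
    rw [← hθ, ← Real.Angle.coe_coeHom, map_sum]
    exact Finset.sum_congr rfl fun i _ => Real.Angle.coe_toReal (θ i)
  obtain ⟨k, hk⟩ := Real.Angle.coe_eq_zero_iff.mp hcoe
  exact ⟨k, by rw [← hk, zsmul_eq_mul]; ring⟩

theorem total_signed_curvature_of_closed_polygon_general
    (n : ℕ) [NeZero n]
    (C : ZMod n → EuclideanSpace ℝ (Fin 2))
    (hC : ∀ i : ZMod n, C (i + 1) ≠ C i) :
    ∃ k : ℤ,
      ∑ i : ZMod n, (stdOrientation.oangle (C i - C (i - 1)) (C (i + 1) - C i)).toReal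
        = 2 * Real.pi * k := by
  set e : ZMod n → EuclideanSpace ℝ (Fin 2) := fun i => C (i + 1) - C i
  have he : ∀ i, e i ≠ 0 := fun i => sub_ne_zero.mpr (hC i)
  have hprev : ∀ i : ZMod n, C i - C (i - 1) = e (Equiv.subRight 1 i) := fun i => by
    simp only [e, Equiv.subRight_apply, sub_add_cancel]
  simp only [hprev]
  exact Real.Angle.exists_sum_toReal_eq_two_pi_mul_of_sum_eq_zero _
    (stdOrientation.sum_oangle_perm_eq_zero _ he)

theorem total_signed_curvature_of_closed_polygon
    (n : ℕ) [NeZero n] (hn : 3 ≤ n)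
    (C : ZMod n → EuclideanSpace ℝ (Fin 2))
    (hC : ∀ i : ZMod n, C (i + 1) ≠ C i)
    (hrev : ∀ i : ZMod n,
      stdOrientation.oangle (C i - C (i - 1)) (C (i + 1) - C i) ≠ (Real.pi : Real.Angle)) :
    ∃ k : ℤ,
      ∑ i : ZMod n, (stdOrientation.oangle (C i - C (i - 1)) (C (i + 1) - C i)).toReal
        = 2 * Real.pi * k :=
  total_signed_curvature_of_closed_polygon_general n C hC
end

section
/- Let L > 0 and let γ : ℝ → EuclideanSpace ℝ (Fin 2) be twice continuously differentiable, L-periodic (γ(t + L) = γ(t) for all t), and parametrized by arc length (‖γ'(t)‖ = 1 for all t). Then there exists an integer k such that ∫_0^L κˢ(t) dt = 2πk, where κˢ(t) = γ₁''(t)·γ₀'(t) − γ₀''(t)·γ₁'(t) is the signed curvature of γ. -/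
/-!
Identify the plane with `ℂ` and let `z = γ'` be the unit tangent, viewed as a complex number.
Since `|z| = 1`, `z'` is orthogonal to `z`, so `z' = i κˢ z`; solving this linear equation gives
`z(t) = exp (i ∫₀ᵗ κˢ) z(0)`. Periodicity of `γ` makes `z(L) = z(0) ≠ 0`, hence
`exp (i ∫₀ᴸ κˢ) = 1`, i.e. `∫₀ᴸ κˢ ∈ 2πℤ`.
-/

open Complex ComplexConjugate

theorem Complex.eq_exp_integral_mul_of_hasDerivAt {a z : ℝ → ℂ} (ha : Continuous a)
    (hz : ∀ t, HasDerivAt z (a t * z t) t) (t : ℝ) :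
    z t = exp (∫ s in (0 : ℝ)..t, a s) * z 0 := by
  set A : ℝ → ℂ := fun t ↦ ∫ s in (0 : ℝ)..t, a s
  have hA : ∀ t, HasDerivAt A (a t) t := fun t ↦ (ha.integral_hasStrictDerivAt 0 t).hasDerivAt
  have hderiv_zero : ∀ t, HasDerivAt (fun t ↦ exp (-A t) * z t) 0 t := fun t ↦ by
    have h := ((hA t).fun_neg.cexp).fun_mul (hz t)
    rwa [mul_neg, neg_mul, mul_assoc, neg_add_cancel] at h
  have hconst := is_const_of_deriv_eq_zero (fun t ↦ (hderiv_zero t).differentiableAt)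
    (fun t ↦ (hderiv_zero t).deriv) t 0
  simp only [A, intervalIntegral.integral_same, neg_zero, exp_zero, one_mul] at hconst
  rw [← hconst, ← mul_assoc, ← exp_add, add_neg_cancel, exp_zero, one_mul]

theorem Complex.hasDerivAt_I_mul_of_norm_eq_one {z : ℝ → ℂ} {z' : ℂ} {t : ℝ}
    (hz : HasDerivAt z z' t) (hnorm : ∀ s, ‖z s‖ = 1) :
    HasDerivAt z (I * (conj (z t) * z').im * z t) t := by
  have horth : (conj (z t) * z').re = 0 := by
    have h := hz.norm_sq.unique (by simpa [hnorm] using hasDerivAt_const t (1 : ℝ))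
    simpa [Complex.inner, mul_comm] using h
  convert hz using 1
  calc I * (conj (z t) * z').im * z t = conj (z t) * z' * z t := by
        conv_rhs => rw [← re_add_im (conj (z t) * z')]
        rw [horth]
        push_cast
        ring
    _ = ‖z t‖ ^ 2 * z' := by rw [← mul_conj']; ring
    _ = z' := by rw [hnorm]; simp

theorem Complex.im_conj_orthonormalBasisOneI_repr_symm_mul (v w : EuclideanSpace ℝ (Fin 2)) :
    (conj (orthonormalBasisOneI.repr.symm v) * orthonormalBasisOneI.repr.symm w).im =
      w 1 * v 0 - w 0 * v 1 := by
  simp [orthonormalBasisOneI_repr_symm_apply]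
  ring

theorem total_signed_curvature_of_closed_curve_general
    (L : ℝ)
    (γ : ℝ → EuclideanSpace ℝ (Fin 2))
    (hsmooth : ContDiff ℝ 2 γ)
    (hper : ∀ t : ℝ, γ (t + L) = γ t)
    (hunit : ∀ t : ℝ, ‖deriv γ t‖ = 1) :
    ∃ k : ℤ,
      ∫ t in (0 : ℝ)..L,
        (deriv (deriv γ) t 1 * deriv γ t 0 - deriv (deriv γ) t 0 * deriv γ t 1)
      = 2 * Real.pi * k := by
  set κ : ℝ → ℝ := fun t ↦
    deriv (deriv γ) t 1 * deriv γ t 0 - deriv (deriv γ) t 0 * deriv γ t 1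
  let e := orthonormalBasisOneI.repr.symm
  set z : ℝ → ℂ := fun t ↦ e (deriv γ t)
  have hγ' : ContDiff ℝ 1 (deriv γ) := ContDiff.deriv' (n := 1) hsmooth
  have hκ : Continuous κ := by
    have hγ''_cont := hγ'.continuous_deriv le_rfl
    have hγ'_cont := hγ'.continuous
    fun_prop
  have hz : ∀ t, HasDerivAt z (I * κ t * z t) t := fun t ↦ by
    have h : HasDerivAt z (e (deriv (deriv γ) t)) t :=
      e.toContinuousLinearEquiv.hasFDerivAt.comp_hasDerivAt t
        ((hγ'.differentiable one_ne_zero) t).hasDerivAt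
    have hκt : κ t = (conj (z t) * e (deriv (deriv γ) t)).im :=
      (im_conj_orthonormalBasisOneI_repr_symm_mul _ _).symm
    rw [hκt]
    exact hasDerivAt_I_mul_of_norm_eq_one h (fun s ↦ by simp [z, hunit])
  have hperiodic : z L = z 0 := by
    have h := deriv_comp_add_const (f := γ) (a := L) (x := 0)
    rw [funext hper, zero_add] at h
    simp only [z, h]
  have hexp := eq_exp_integral_mul_of_hasDerivAt (by fun_prop) hz L
  rw [hperiodic, eq_comm, mul_eq_right₀ (norm_ne_zero_iff.mp (by simp [z, hunit])),
    intervalIntegral.integral_const_mul, intervalIntegral.integral_ofReal, exp_eq_one_iff] at hexp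
  obtain ⟨k, hk⟩ := hexp
  refine ⟨k, ofReal_injective (mul_left_cancel₀ I_ne_zero ?_)⟩
  rw [hk]
  push_cast
  ring

theorem total_signed_curvature_of_closed_curve
    (L : ℝ) (hL : 0 < L)
    (γ : ℝ → EuclideanSpace ℝ (Fin 2))
    (hsmooth : ContDiff ℝ 2 γ)
    (hper : ∀ t : ℝ, γ (t + L) = γ t)
    (hunit : ∀ t : ℝ, ‖deriv γ t‖ = 1) :
    ∃ k : ℤ,
      ∫ t in (0 : ℝ)..L,
        (deriv (deriv γ) t 1 * deriv γ t 0 - deriv (deriv γ) t 0 * deriv γ t 1)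
      = 2 * Real.pi * k :=
  total_signed_curvature_of_closed_curve_general L γ hsmooth hper hunit
end

section
/- (Hopf's Umlaufsatz.) Let L > 0 and let γ : ℝ → EuclideanSpace ℝ (Fin 2) be twice continuously differentiable, L-periodic, parametrized by arc length (‖γ'(t)‖ = 1 for all t), and simple, i.e. γ is injective on the interval [0, L). Then ∫_0^L κˢ(t) dt = 2π or ∫_0^L κˢ(t) dt = −2π, where κˢ(t) = γ₁''(t)·γ₀'(t) − γ₀''(t)·γ₁'(t) is the signed curvature of γ. -/
/-!
Identify the plane with `ℂ`. On the strip `s ≤ t ≤ s + L` the chord from `f s` to `f t`, continued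
by the tangent `f' s` on the diagonal and by `-f' s` on the edge `t = s + L`, does not vanish
because the curve is simple; the strip is convex, so this chord map has a continuous angle `Θ`.
On the diagonal `Θ` is the tangent angle, which increases by `∫ κˢ` over a period.

Take the base point `a` lowest on the curve; after reflecting the curve in a vertical line,
`f' a = 1`. All chords from `f a` point into the closed upper half-plane, so along the edge
`s = a` the angle runs from `0` to `π` without leaving `[0, π]`. All chords ending at
`f (a + L) = f a` point into the closed lower half-plane, so along the edge `t = a + L` it runs on
from `π` to `2π`. Hence `∫ κˢ = Θ (a + L, a + L) - Θ (a, a) = 2π`, and `-2π` before reflecting.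
-/

open Real
open Complex (I arg)
open scoped Complex ComplexConjugate

theorem Convex.exists_continuousOn_arg {E : Type*} [NormedAddCommGroup E] [NormedSpace ℝ E]
    {S : Set E} (hS : Convex ℝ S) {h : E → ℂ} (hh : ContinuousOn h S) (h0 : ∀ p ∈ S, h p ≠ 0)
    {p₀ : E} (hp₀ : p₀ ∈ S) :
    ∃ Θ : E → ℝ, ContinuousOn Θ S ∧ Θ p₀ = arg (h p₀) ∧
      ∀ p ∈ S, cexp (Θ p * I) = ‖h p‖⁻¹ • h p := by
  classical
  have : ContractibleSpace S := hS.contractibleSpace ⟨p₀, hp₀⟩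
  have := hS.locallyPathConnectedSpace
  obtain ⟨Λ, ⟨hΛ₀, hΛ⟩, -⟩ := Complex.isCoveringMapOn_exp.existsUnique_continuousMap_lifts
    ⟨S.domRestrict h, hh.domRestrict⟩ (a₀ := ⟨p₀, hp₀⟩) (Complex.exp_log (h0 p₀ hp₀))
    (fun p => h0 p p.2)
  have hexp : ∀ p : S, cexp (Λ p) = h p := fun p => congrFun hΛ p
  refine ⟨fun p => if hp : p ∈ S then (Λ ⟨p, hp⟩).im else 0, ?_, ?_, fun p hp => ?_⟩
  · rw [continuousOn_iff_continuous_domRestrict]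
    convert Complex.continuous_im.comp Λ.continuous using 1
    ext p
    simp
  · simp [hp₀, hΛ₀, Complex.log_im]
  · rw [← hexp ⟨p, hp⟩, Complex.norm_exp, Complex.real_smul, ← Complex.re_add_im (Λ _),
      Complex.exp_add, ← Complex.ofReal_exp, Complex.add_re, Complex.ofReal_re]
    simp [hp]

theorem eq_of_exp_mul_I_eq {X : Type*} [TopologicalSpace X] [PreconnectedSpace X] {u v : X → ℝ}
    (hu : Continuous u) (hv : Continuous v) (h : ∀ x, cexp (u x * I) = cexp (v x * I))
    {x₀ : X} (h₀ : u x₀ = v x₀) : u = v :=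
  Circle.isCoveringMap_exp.eq_of_comp_eq hu hv (funext fun x => Circle.ext (h x)) x₀ h₀

theorem eq_pi_of_sin_nonneg {X : Type*} [TopologicalSpace X] {S : Set X} (hS : IsPreconnected S)
    {u : X → ℝ} (hu : ContinuousOn u S) (hsin : ∀ x ∈ S, 0 ≤ sin (u x)) {x₀ x₁ : X}
    (hx₀ : x₀ ∈ S) (hx₁ : x₁ ∈ S) (h₀ : u x₀ = 0) (h₁ : cos (u x₁) = -1) : u x₁ = π := by
  have hmem₀ : (0 : ℝ) ∈ u '' S := ⟨x₀, hx₀, h₀⟩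
  have hmem₁ : u x₁ ∈ u '' S := ⟨x₁, hx₁, rfl⟩
  have hsin_image : ∀ y ∈ u '' S, 0 ≤ sin y := by
    rintro _ ⟨x, hx, rfl⟩
    exact hsin x hx
  have hpi := pi_pos
  refine injOn_cos ⟨?_, ?_⟩ ⟨hpi.le, le_rfl⟩ (h₁.trans cos_pi.symm)
  · by_contra! hneg
    have hy : max (u x₁) (-(π / 2)) ∈ u '' S :=
      (hS.image u hu).Icc_subset hmem₁ hmem₀ ⟨le_max_left _ _, max_le hneg.le (by linarith)⟩
    have := hsin_image _ hy
    have := sin_neg_of_neg_of_neg_pi_lt (x := max (u x₁) (-(π / 2))) (max_lt hneg (by linarith))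
      (lt_max_of_lt_right (by linarith))
    linarith
  · by_contra! hbig
    have hy : min (u x₁) (3 * π / 2) ∈ u '' S :=
      (hS.image u hu).Icc_subset hmem₀ hmem₁ ⟨le_min (by linarith) (by positivity), min_le_left _ _⟩
    have := hsin_image _ hy
    have hgt : π < min (u x₁) (3 * π / 2) := lt_min hbig (by linarith)
    have := sin_neg_of_neg_of_neg_pi_lt (x := min (u x₁) (3 * π / 2) - 2 * π)
      (by linarith [min_le_right (u x₁) (3 * π / 2)]) (by linarith)
    rw [sin_sub_two_pi] at this
    linarith

theorem ContDiff.continuous_uncurry_dslope {E : Type*} [NormedAddCommGroup E] [NormedSpace ℝ E]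
    [CompleteSpace E] {f : ℝ → E} (hf : ContDiff ℝ 1 f) :
    Continuous (Function.uncurry (dslope f)) := by
  have hdiff := hf.differentiable one_ne_zero
  have hcont := hf.continuous_deriv le_rfl
  have hrepr : Function.uncurry (dslope f) =
      fun p : ℝ × ℝ => ∫ u in (0 : ℝ)..1, deriv f (p.1 + (p.2 - p.1) * u) := by
    ext ⟨a, b⟩
    rcases eq_or_ne b a with rfl | hne
    · simp
    · rw [Function.uncurry_apply_pair, dslope_of_ne f hne, slope_def_module,
        intervalIntegral.integral_comp_add_mul _ (sub_ne_zero.2 hne), mul_zero, add_zero, mul_one,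
        add_sub_cancel, intervalIntegral.integral_deriv_eq_sub (fun x _ => hdiff x)
          (hcont.intervalIntegrable a b)]
  rw [hrepr]
  exact intervalIntegral.continuous_parametric_intervalIntegral_of_continuous'
    (by fun_prop) 0 1

theorem LinearIsometryEquiv.deriv_comp {F G : Type*} [NormedAddCommGroup F] [NormedSpace ℝ F]
    [NormedAddCommGroup G] [NormedSpace ℝ G] (e : F ≃ₗᵢ[ℝ] G) (g : ℝ → F) :
    deriv (fun t => e (g t)) = fun t => e (deriv g t) := by
  ext t : 1
  change fderiv ℝ (e ∘ g) t 1 = _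
  rw [e.comp_fderiv]
  rfl

namespace Function.Periodic

theorem deriv {E : Type*} [NormedAddCommGroup E] [NormedSpace ℝ E] {f : ℝ → E} {L : ℝ}
    (hper : Periodic f L) : Periodic (_root_.deriv f) L := fun x => by
  rw [← deriv_comp_add_const, hper.funext]

theorem exists_forall_le {α : Type*} [LinearOrder α] [TopologicalSpace α] [ClosedIicTopology α]
    {g : ℝ → α} {L : ℝ} (hper : Periodic g L) (hL : L ≠ 0) (hg : Continuous g) :
    ∃ a, ∀ t, g a ≤ g t := by
  obtain ⟨_, ⟨a, rfl⟩, ha⟩ := (hper.compact_of_continuous hL hg).exists_isLeast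
    (Set.range_nonempty g)
  exact ⟨a, fun t => ha ⟨t, rfl⟩⟩

theorem ne_of_injOn_Ico {α : Type*} {f : ℝ → α} {L : ℝ} (hper : Periodic f L) (hL : 0 < L)
    (hinj : Set.InjOn f (Set.Ico 0 L)) {s t : ℝ} (hst : s < t) (hts : t < s + L) :
    f s ≠ f t := by
  intro heq
  have hmod : ∀ x, f (toIcoMod hL 0 x) = f x := fun x => hper.sub_zsmul_eq _
  have hIco : ∀ x, toIcoMod hL 0 x ∈ Set.Ico 0 L := fun x => by
    simpa using toIcoMod_mem_Ico hL 0 x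
  obtain ⟨n, hn⟩ := (toIcoMod_eq_toIcoMod hL).1 <|
    hinj (hIco s) (hIco t) (by rw [hmod, hmod, heq])
  rw [zsmul_eq_mul] at hn
  have h0 : (0 : ℝ) < n := pos_of_mul_pos_left (by linarith) hL.le
  have h1 : (n : ℝ) < 1 := by nlinarith
  norm_cast at h0 h1
  omega

end Function.Periodic

section SecantMap

variable {E : Type*} [NormedAddCommGroup E] [NormedSpace ℝ E] {f : ℝ → E} {L : ℝ}

/-- For `s < t < s + L` this is `(f t - f s) / ((t - s) (L - (t - s)))`, a positive multiple of
the chord from `f s` to `f t`, scaled so that it extends continuously by `f' s / L` to the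
diagonal and, for `L`-periodic `f`, by `-f' s / L` to `t = s + L`. The second branch writes the
chord through `f (t - L) = f t`. -/
noncomputable def secantMap (f : ℝ → E) (L : ℝ) (p : ℝ × ℝ) : E :=
  if p.2 - p.1 < L then (L - (p.2 - p.1))⁻¹ • dslope f p.1 p.2
  else -((p.2 - p.1)⁻¹ • dslope f p.1 (p.2 - L))

theorem secantMap_of_lt {s t : ℝ} (hst : s < t) (hts : t < s + L) :
    secantMap f L (s, t) = ((t - s) * (L - (t - s)))⁻¹ • (f t - f s) := by
  rw [secantMap, if_pos (by linarith), dslope_of_ne f hst.ne', slope_def_module, smul_smul,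
    mul_inv, mul_comm]

theorem secantMap_self (hL : 0 < L) (s : ℝ) : secantMap f L (s, s) = L⁻¹ • deriv f s := by
  simp [secantMap, hL]

theorem secantMap_add_period (s : ℝ) : secantMap f L (s, s + L) = -(L⁻¹ • deriv f s) := by
  simp [secantMap]

theorem secantMap_eq_of_pos (hper : Function.Periodic f L) {p : ℝ × ℝ} (hp : 0 < p.2 - p.1) :
    secantMap f L p = -((p.2 - p.1)⁻¹ • dslope f p.1 (p.2 - L)) := by
  obtain ⟨s, t⟩ := p
  dsimp only at hp ⊢
  by_cases hlt : t - s < L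
  · rw [secantMap_of_lt (by linarith) (by linarith), dslope_of_ne f (by linarith),
      slope_def_module, hper.sub_eq, smul_smul, ← neg_smul]
    congr 1
    rw [show t - L - s = -(L - (t - s)) by ring, inv_neg, mul_inv, mul_neg, neg_neg]
  · rw [secantMap, if_neg hlt]

theorem continuous_secantMap [CompleteSpace E] (hf : ContDiff ℝ 1 f)
    (hper : Function.Periodic f L) (hL : 0 < L) : Continuous (secantMap f L) := by
  have hdslope := hf.continuous_uncurry_dslope
  refine continuous_iff_continuousAt.2 fun p => ?_
  rcases lt_or_ge (p.2 - p.1) L with hlt | hge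
  · have hev : secantMap f L =ᶠ[nhds p] fun q => (L - (q.2 - q.1))⁻¹ • dslope f q.1 q.2 := by
      filter_upwards [(isOpen_lt (continuous_snd.sub continuous_fst) continuous_const).mem_nhds
        hlt] with q hq
      exact if_pos hq
    refine ContinuousAt.congr ?_ hev.symm
    exact (ContinuousAt.inv₀ (f := fun q : ℝ × ℝ => L - (q.2 - q.1)) (by fun_prop)
      (sub_pos.2 hlt).ne').smul hdslope.continuousAt
  · have hpos : 0 < p.2 - p.1 := by linarith
    have hev : secantMap f L =ᶠ[nhds p] fun q => -((q.2 - q.1)⁻¹ • dslope f q.1 (q.2 - L)) := by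
      filter_upwards [(isOpen_lt continuous_const (continuous_snd.sub continuous_fst)).mem_nhds
        hpos] with q hq
      exact secantMap_eq_of_pos hper hq
    refine ContinuousAt.congr ?_ hev.symm
    exact (((by fun_prop : ContinuousAt (fun q : ℝ × ℝ => q.2 - q.1) p).inv₀ hpos.ne').smul
      (hdslope.comp (by fun_prop : Continuous fun q : ℝ × ℝ => (q.1, q.2 - L))).continuousAt).neg

theorem secantMap_ne_zero (hL : 0 < L) (hderiv : ∀ s, deriv f s ≠ 0)
    (hsimple : ∀ s t, s < t → t < s + L → f s ≠ f t) {s t : ℝ} (hst : s ≤ t) (hts : t ≤ s + L) :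
    secantMap f L (s, t) ≠ 0 := by
  rcases hst.eq_or_lt with rfl | hst
  · simp [secantMap_self hL, hL.ne', hderiv]
  rcases hts.eq_or_lt with rfl | hts
  · simp [secantMap_add_period, hL.ne', hderiv]
  have : 0 < L - (t - s) := by linarith
  rw [secantMap_of_lt hst hts, smul_ne_zero_iff]
  exact ⟨by positivity, sub_ne_zero.2 (hsimple s t hst hts).symm⟩

end SecantMap

section SignedCurvature

variable {f : ℝ → ℂ} {L a : ℝ}

noncomputable def signedCurvature (f : ℝ → ℂ) (t : ℝ) : ℝ :=
  (conj (deriv f t) * deriv (deriv f) t).im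

theorem continuous_signedCurvature (hf : ContDiff ℝ 2 f) : Continuous (signedCurvature f) := by
  have := hf.continuous_deriv one_le_two
  have := (hf.deriv' (n := 1)).continuous_deriv le_rfl
  unfold signedCurvature
  fun_prop

theorem deriv_deriv_eq_mul_signedCurvature (hf : ContDiff ℝ 2 f) (hunit : ∀ t, ‖deriv f t‖ = 1)
    (t : ℝ) : deriv (deriv f) t = deriv f t * (signedCurvature f t * I) := by
  have horth : (conj (deriv f t) * deriv (deriv f) t).re = 0 := by
    have hsq := (((hf.deriv' (n := 1)).differentiable one_ne_zero) t).hasDerivAt.norm_sq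
    simp only [hunit, one_pow] at hsq
    have := hsq.unique (hasDerivAt_const t 1)
    rw [Complex.inner] at this
    rw [mul_comm]
    linarith
  calc deriv (deriv f) t = (deriv f t * conj (deriv f t)) * deriv (deriv f) t := by
        rw [Complex.mul_conj, Complex.normSq_eq_norm_sq, hunit]; simp
    _ = deriv f t * (signedCurvature f t * I) := by
        rw [mul_assoc, signedCurvature, ← Complex.re_add_im (conj _ * _), horth]; simp

theorem deriv_eq_mul_exp_integral_signedCurvature (hf : ContDiff ℝ 2 f)
    (hunit : ∀ t, ‖deriv f t‖ = 1) (a t : ℝ) :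
    deriv f t = deriv f a * cexp ((∫ s in a..t, signedCurvature f s) * I) := by
  set θ : ℝ → ℝ := fun t => ∫ s in a..t, signedCurvature f s
  have hθ : ∀ t, HasDerivAt θ (signedCurvature f t) t := fun t =>
    (continuous_signedCurvature hf).integral_hasStrictDerivAt a t |>.hasDerivAt
  have hconst : ∀ t, HasDerivAt (fun s => deriv f s * cexp (-(θ s * I))) 0 t := by
    intro t
    refine ((((hf.deriv' (n := 1)).differentiable one_ne_zero) t).hasDerivAt.fun_mul
      (((hθ t).ofReal_comp.mul_const I).fun_neg.cexp)).congr_deriv ?_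
    rw [deriv_deriv_eq_mul_signedCurvature hf hunit]
    ring
  have key := is_const_of_deriv_eq_zero (fun s => (hconst s).differentiableAt)
    (fun s => (hconst s).deriv) t a
  simp only [θ, intervalIntegral.integral_same, Complex.ofReal_zero, zero_mul, neg_zero,
    Complex.exp_zero, mul_one] at key
  rw [← key, mul_assoc, ← Complex.exp_add]
  simp

theorem signedCurvature_periodic (hper : Function.Periodic f L) :
    Function.Periodic (signedCurvature f) L := fun t => by
  rw [signedCurvature, signedCurvature, hper.deriv t, hper.deriv.deriv t]

theorem deriv_neg_conj (g : ℝ → ℂ) :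
    deriv (fun s => -conj (g s)) = fun s => -conj (deriv g s) := by
  ext s
  rw [deriv.fun_neg]
  exact congrArg _ deriv.star

theorem signedCurvature_neg_conj (t : ℝ) :
    signedCurvature (fun s => -conj (f s)) t = -signedCurvature f t := by
  rw [signedCurvature, deriv_neg_conj, deriv_neg_conj, signedCurvature]
  simp [mul_comm]

theorem deriv_eq_one_or_eq_neg_one_of_forall_im_le (hf : DifferentiableAt ℝ f a)
    (hunit : ‖deriv f a‖ = 1) (hlow : ∀ t, (f a).im ≤ (f t).im) :
    deriv f a = 1 ∨ deriv f a = -1 := by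
  have him : (deriv f a).im = 0 := IsLocalMin.hasDerivAt_eq_zero (.of_forall hlow)
    (Complex.imCLM.hasFDerivAt.comp_hasDerivAt a hf.hasDerivAt)
  rw [← Complex.re_add_im (deriv f a), him] at hunit ⊢
  simp only [Complex.ofReal_zero, zero_mul, add_zero, Complex.norm_real,
    Real.norm_eq_abs] at hunit ⊢
  rcases abs_eq zero_le_one |>.1 hunit with h | h <;> simp [h]

end SignedCurvature

section LowestPoint

variable {f : ℝ → ℂ} {L a : ℝ}

theorem im_secantMap_left_nonneg (hL : 0 < L) (hlow : ∀ t, (f a).im ≤ (f t).im)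
    (hdir : deriv f a = 1) {x : ℝ} (hx : x ∈ Set.Icc a (a + L)) :
    0 ≤ (secantMap f L (a, x)).im := by
  rcases hx.1.eq_or_lt with rfl | hax
  · simp [secantMap_self hL, hdir]
  rcases hx.2.eq_or_lt with rfl | hxL
  · simp [secantMap_add_period, hdir]
  have : 0 < L - (x - a) := by linarith
  rw [secantMap_of_lt hax hxL, Complex.smul_im, smul_eq_mul, Complex.sub_im]
  exact mul_nonneg (by positivity) (sub_nonneg.2 (hlow x))

theorem im_secantMap_top_nonpos (hL : 0 < L) (hper : Function.Periodic f L)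
    (hlow : ∀ t, (f a).im ≤ (f t).im) (hdir : deriv f a = 1) {s : ℝ}
    (hs : s ∈ Set.Icc a (a + L)) : (secantMap f L (s, a + L)).im ≤ 0 := by
  rcases hs.1.eq_or_lt with rfl | has
  · simp [secantMap_add_period, hdir]
  rcases hs.2.eq_or_lt with rfl | hsL
  · simp [secantMap_self hL, hper.deriv a, hdir]
  have : 0 < L - (a + L - s) := by linarith
  rw [secantMap_of_lt hsL (by linarith), Complex.smul_im, smul_eq_mul, Complex.sub_im, hper a]
  exact mul_nonpos_of_nonneg_of_nonpos (by positivity) (sub_nonpos.2 (hlow s))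

theorem integral_signedCurvature_eq_two_pi_of_forall_im_le (hL : 0 < L) (hf : ContDiff ℝ 2 f)
    (hper : Function.Periodic f L) (hunit : ∀ t, ‖deriv f t‖ = 1)
    (hsimple : ∀ s t, s < t → t < s + L → f s ≠ f t) (hlow : ∀ t, (f a).im ≤ (f t).im)
    (hdir : deriv f a = 1) : ∫ t in a..a + L, signedCurvature f t = 2 * π := by
  set S := {p : ℝ × ℝ | p.1 ≤ p.2 ∧ p.2 ≤ p.1 + L}
  have hS : Convex ℝ S := by
    rintro p ⟨hp₁, hp₂⟩ q ⟨hq₁, hq₂⟩ x y hx hy hxy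
    simp only [S, Set.mem_ofPred_eq, Prod.fst_add, Prod.snd_add, Prod.smul_fst, Prod.smul_snd,
      smul_eq_mul]
    constructor <;> nlinarith
  have hderiv : ∀ s, deriv f s ≠ 0 := fun s h => by simpa [h] using hunit s
  obtain ⟨Θ, hΘc, hΘ₀, hΘ⟩ := hS.exists_continuousOn_arg
    (continuous_secantMap (hf.of_le one_le_two) hper hL).continuousOn
    (fun p hp => secantMap_ne_zero hL hderiv hsimple hp.1 hp.2) (p₀ := (a, a))
    ⟨le_rfl, by linarith⟩
  rw [secantMap_self hL, hdir, Complex.real_smul, mul_one, Complex.arg_ofReal_of_nonneg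
    (by positivity)] at hΘ₀
  have hdiag : ∀ t, Θ (t, t) = ∫ s in a..t, signedCurvature f s := by
    refine congrFun (eq_of_exp_mul_I_eq (u := fun t => Θ (t, t))
      (hΘc.comp_continuous (by fun_prop) fun t => ⟨le_rfl, by linarith⟩)
      (intervalIntegral.continuous_primitive
        (fun _ _ => (continuous_signedCurvature hf).intervalIntegrable _ _) a)
      (fun t => ?_) (x₀ := a) (by simpa using hΘ₀))
    have htangent := deriv_eq_mul_exp_integral_signedCurvature hf hunit a t
    rw [hdir, one_mul] at htangent
    rw [hΘ (t, t) ⟨le_rfl, by linarith⟩, ← htangent, secantMap_self hL, norm_smul, hunit,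
      smul_smul]
    simp [hL.ne', abs_of_pos hL]
  have hleft_mem : ∀ x ∈ Set.Icc a (a + L), (a, x) ∈ S := fun x hx => hx
  have htop_mem : ∀ s ∈ Set.Icc a (a + L), (s, a + L) ∈ S := fun s hs => ⟨hs.2, by linarith [hs.1]⟩
  have hleft : Θ (a, a + L) = π := by
    refine eq_pi_of_sin_nonneg isPreconnected_Icc (u := fun x => Θ (a, x))
      (hΘc.comp (by fun_prop) hleft_mem) (fun x hx => ?_) (x₀ := a) (x₁ := a + L)
      ⟨le_rfl, by linarith⟩ ⟨by linarith, le_rfl⟩ hΘ₀ ?_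
    · rw [← Complex.exp_ofReal_mul_I_im, hΘ _ (hleft_mem x hx), Complex.smul_im, smul_eq_mul]
      exact mul_nonneg (by positivity) (im_secantMap_left_nonneg hL hlow hdir hx)
    · rw [← Complex.exp_ofReal_mul_I_re, hΘ _ (hleft_mem _ ⟨by linarith, le_rfl⟩),
        secantMap_add_period, hdir]
      simp [hL.ne', abs_of_pos hL]
  have htop : Θ (a + L, a + L) - π = π := by
    refine eq_pi_of_sin_nonneg isPreconnected_Icc (u := fun s => Θ (s, a + L) - π)
      ((hΘc.comp (by fun_prop) htop_mem).sub continuousOn_const) (fun s hs => ?_) (x₀ := a)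
      (x₁ := a + L) ⟨le_rfl, by linarith⟩ ⟨by linarith, le_rfl⟩ (sub_eq_zero.2 hleft) ?_
    · rw [sin_sub_pi, ← Complex.exp_ofReal_mul_I_im, hΘ _ (htop_mem s hs), Complex.smul_im,
        smul_eq_mul, neg_nonneg]
      exact mul_nonpos_of_nonneg_of_nonpos (by positivity)
        (im_secantMap_top_nonpos hL hper hlow hdir hs)
    · rw [cos_sub_pi, ← Complex.exp_ofReal_mul_I_re, hΘ _ (htop_mem _ ⟨by linarith, le_rfl⟩),
        secantMap_self hL, hper.deriv a, hdir]
      simp [hL.ne', abs_of_pos hL]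
  rw [← hdiag]
  linarith

end LowestPoint

theorem integral_signedCurvature_eq_two_pi_or_eq_neg_two_pi {f : ℝ → ℂ} {L : ℝ} (hL : 0 < L)
    (hf : ContDiff ℝ 2 f) (hper : Function.Periodic f L) (hunit : ∀ t, ‖deriv f t‖ = 1)
    (hsimple : ∀ s t, s < t → t < s + L → f s ≠ f t) :
    ∫ t in (0 : ℝ)..L, signedCurvature f t = 2 * π ∨
      ∫ t in (0 : ℝ)..L, signedCurvature f t = -(2 * π) := by
  obtain ⟨a, hlow⟩ := (hper.comp Complex.im).exists_forall_le hL.ne' (by fun_prop)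
  have hshift : ∫ t in (0 : ℝ)..L, signedCurvature f t = ∫ t in a..a + L, signedCurvature f t := by
    simpa using (signedCurvature_periodic hper).intervalIntegral_add_eq 0 a
  rw [hshift]
  rcases deriv_eq_one_or_eq_neg_one_of_forall_im_le ((hf.differentiable two_ne_zero) a)
    (hunit a) hlow with hdir | hdir
  · exact .inl (integral_signedCurvature_eq_two_pi_of_forall_im_le hL hf hper hunit hsimple hlow
      hdir)
  · -- the mirror image `-conj ∘ f` has the same lowest point, tangent `1` there, curvature `-κˢ`
    have hmirror := integral_signedCurvature_eq_two_pi_of_forall_im_le (f := fun s => -conj (f s))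
      hL (Complex.conjCLE.contDiff.comp hf).neg (fun t => by simp [hper t])
      (fun t => by rw [deriv_neg_conj]; simp [hunit])
      (fun s t hst hts heq => hsimple s t hst hts (by simpa using congrArg conj heq))
      (by simpa using hlow) (by rw [deriv_neg_conj]; simp [hdir])
    simp only [signedCurvature_neg_conj, intervalIntegral.integral_neg] at hmirror
    exact .inr (by linarith)

/-- Hopf's Umlaufsatz: the total signed curvature of a simple closed plane curve
is `2 * π` or `-2 * π`. -/
theorem hopf_umlaufsatz
    (L : ℝ) (hL : 0 < L)
    (γ : ℝ → EuclideanSpace ℝ (Fin 2))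
    (hsmooth : ContDiff ℝ 2 γ)
    (hper : ∀ t : ℝ, γ (t + L) = γ t)
    (hunit : ∀ t : ℝ, ‖deriv γ t‖ = 1)
    (hsimple : Set.InjOn γ (Set.Ico 0 L)) :
    (∫ t in (0 : ℝ)..L,
        (deriv (deriv γ) t 1 * deriv γ t 0 - deriv (deriv γ) t 0 * deriv γ t 1))
      = 2 * Real.pi ∨
    (∫ t in (0 : ℝ)..L,
        (deriv (deriv γ) t 1 * deriv γ t 0 - deriv (deriv γ) t 0 * deriv γ t 1))
      = -(2 * Real.pi) := by
  let l : EuclideanSpace ℝ (Fin 2) ≃ₗᵢ[ℝ] ℂ := Complex.orthonormalBasisOneI.repr.symm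
  have hcurv : ∀ t, signedCurvature (fun t => l (γ t)) t =
      deriv (deriv γ) t 1 * deriv γ t 0 - deriv (deriv γ) t 0 * deriv γ t 1 := fun t => by
    rw [signedCurvature, l.deriv_comp, l.deriv_comp]
    simp only [l, Complex.orthonormalBasisOneI_repr_symm_apply, Complex.mul_im, Complex.conj_re,
      Complex.conj_im, Complex.add_re, Complex.add_im, Complex.mul_re, Complex.ofReal_re,
      Complex.ofReal_im, Complex.I_re, Complex.I_im]
    ring
  simp_rw [← hcurv]
  exact integral_signedCurvature_eq_two_pi_or_eq_neg_two_pi hL (l.contDiff.comp hsmooth)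
    (fun t => by simp [hper t]) (fun t => by simp [l.deriv_comp, hunit])
    (fun s t hst hts heq => Function.Periodic.ne_of_injOn_Ico hper hL hsimple hst hts
      (l.injective heq))
end

section
/- (Fenchel's theorem, discrete case.) Let n ≥ 3 and let C : ZMod n → EuclideanSpace ℝ (Fin 3) be a closed polygon with C(i+1) ≠ C(i) for all i. Then ∑_{i ∈ ZMod n} κ_i ≥ 2π, where κ_i = angle(C(i+1) − C(i), C(i+2) − C(i+1)) ∈ [0, π] is the unoriented angle between consecutive edge vectors (equivalently, κ_i = π − ∠ C(i) C(i+1) C(i+2)). -/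
/-!
The edge directions trace a closed spherical polygon whose length is the total curvature, and
the edges sum to zero. Induct on the number of edges. Two consecutive edges `a, b` with
`a + b ≠ 0` may be replaced by `a + b`: its direction lies on the arc from `a` to `b`, so by the
triangle inequality for angles the total turning does not grow.
If `a + b = 0`, both edges may be dropped, since deleting vertices of a spherical polygon does not
lengthen it. What remains is a pair of opposite edges, whose total turning is `π + π`.
-/

open InnerProductGeometry Real

section Turning

variable {V : Type*} [NormedAddCommGroup V] [InnerProductSpace ℝ V]

noncomputable def pathTurning : List V → ℝ
  | x :: y :: t => angle x y + pathTurning (y :: t)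
  | _ => 0

noncomputable def loopTurning (l : List V) : ℝ := pathTurning (l ++ l.take 1)

theorem pathTurning_append_singleton (x : V) :
    ∀ (l : List V) (hl : l ≠ []),
      pathTurning (l ++ [x]) = pathTurning l + angle (l.getLast hl) x
  | [a], _ => by simp [pathTurning]
  | a :: b :: t, _ => by
    simp only [List.cons_append, pathTurning, List.getLast_cons_cons]
    rw [← List.cons_append, pathTurning_append_singleton x (b :: t) (List.cons_ne_nil b t)]
    ring

theorem loopTurning_cons (a : V) (t : List V) :
    loopTurning (a :: t) =
      pathTurning (a :: t) + angle ((a :: t).getLast (List.cons_ne_nil a t)) a :=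
  pathTurning_append_singleton a _ _

theorem loopTurning_le_loopTurning_cons (a h : V) (t : List V) :
    loopTurning (h :: t) ≤ loopTurning (a :: h :: t) := by
  simp only [loopTurning_cons, pathTurning, List.getLast_cons_cons]
  linarith [angle_le_angle_add_angle ((h :: t).getLast (List.cons_ne_nil h t)) a h]

theorem loopTurning_add_cons_le (a : V) {b : V} (hb : b ≠ 0) (h : V) (t : List V) :
    loopTurning ((a + b) :: h :: t) ≤ loopTurning (a :: b :: h :: t) := by
  simp only [loopTurning_cons, pathTurning, List.getLast_cons_cons]
  linarith [angle_eq_angle_add_add_angle_add a hb, angle_comm b (a + b),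
    angle_le_angle_add_angle (a + b) b h,
    angle_le_angle_add_angle ((h :: t).getLast (List.cons_ne_nil h t)) a (a + b)]

theorem loopTurning_pair_neg {a : V} (ha : a ≠ 0) : loopTurning [a, -a] = 2 * π := by
  simp [loopTurning, pathTurning, angle_self_neg_of_nonzero ha, angle_neg_self_of_nonzero ha]
  ring

theorem two_pi_le_loopTurning :
    ∀ (l : List V), l ≠ [] → (∀ v ∈ l, v ≠ 0) → l.sum = 0 → 2 * π ≤ loopTurning l
  | [], hl, _, _ => absurd rfl hl
  | [a], _, h0, hsum => absurd (by simpa using hsum) (h0 a (List.mem_singleton_self a))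
  | [a, b], _, h0, hsum => by
    obtain rfl : b = -a := eq_neg_of_add_eq_zero_right (by simpa using hsum)
    rw [loopTurning_pair_neg (h0 a (by simp))]
  | a :: b :: h :: t, _, h0, hsum => by
    rw [List.sum_cons, List.sum_cons, ← add_assoc] at hsum
    by_cases hab : a + b = 0
    · calc 2 * π ≤ loopTurning (h :: t) :=
            two_pi_le_loopTurning (h :: t) (List.cons_ne_nil h t)
              (fun v hv => h0 v (by simp [hv])) (by simpa [hab] using hsum)
        _ ≤ loopTurning (b :: h :: t) := loopTurning_le_loopTurning_cons b h t
        _ ≤ loopTurning (a :: b :: h :: t) := loopTurning_le_loopTurning_cons a b (h :: t)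
    · calc 2 * π ≤ loopTurning ((a + b) :: h :: t) :=
            two_pi_le_loopTurning _ (List.cons_ne_nil _ _)
              (List.forall_mem_cons.2 ⟨hab, fun v hv => h0 v (by simp [hv])⟩)
              (by simpa using hsum)
        _ ≤ loopTurning (a :: b :: h :: t) := loopTurning_add_cons_le a (h0 b (by simp)) h t
termination_by l => l.length

theorem pathTurning_ofFn : ∀ {m : ℕ} (w : Fin (m + 1) → V),
    pathTurning (List.ofFn w) = ∑ i : Fin m, angle (w i.castSucc) (w i.succ)
  | 0, w => by simp [pathTurning]
  | m + 1, w => by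
    have ih := pathTurning_ofFn (fun i => w i.succ)
    rw [List.ofFn_succ] at ih
    rw [List.ofFn_succ, List.ofFn_succ, pathTurning, ih, Fin.sum_univ_succ]
    simp [Fin.succ_castSucc, -Fin.castSucc_succ]

theorem loopTurning_ofFn {m : ℕ} (w : Fin (m + 1) → V) :
    loopTurning (List.ofFn w) = ∑ i, angle (w i) (w (i + 1)) := by
  rw [loopTurning, List.ofFn_succ, List.take_succ_cons, List.take_zero, ← List.ofFn_succ,
    pathTurning_append_singleton _ _ (by simp), List.getLast_ofFn_succ, pathTurning_ofFn,
    Fin.sum_univ_castSucc, Fin.last_add_one]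
  simp only [Fin.coeSucc_eq_succ]

theorem two_pi_le_sum_angle_fin {m : ℕ} (w : Fin (m + 1) → V) (h0 : ∀ i, w i ≠ 0)
    (hsum : ∑ i, w i = 0) : 2 * π ≤ ∑ i, angle (w i) (w (i + 1)) :=
  calc 2 * π ≤ loopTurning (List.ofFn w) :=
        two_pi_le_loopTurning _ (by simp) (List.forall_mem_ofFn_iff.2 h0)
          (by rwa [List.sum_ofFn])
    _ = ∑ i, angle (w i) (w (i + 1)) := loopTurning_ofFn w

theorem two_pi_le_sum_angle_zmod {n : ℕ} [NeZero n] (w : ZMod n → V) (h0 : ∀ i, w i ≠ 0)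
    (hsum : ∑ i, w i = 0) : 2 * π ≤ ∑ i, angle (w i) (w (i + 1)) := by
  obtain ⟨m, rfl⟩ := Nat.exists_eq_succ_of_ne_zero (NeZero.ne n)
  -- `ZMod (m + 1)` is `Fin (m + 1)` by definition, ring structure included.
  exact two_pi_le_sum_angle_fin w h0 hsum

end Turning

theorem fenchel_discrete_general
    (n : ℕ) [NeZero n]
    (C : ZMod n → EuclideanSpace ℝ (Fin 3))
    (hC : ∀ i : ZMod n, C (i + 1) ≠ C i) :
    2 * Real.pi ≤
      ∑ i : ZMod n,
        InnerProductGeometry.angle (C (i + 1) - C i) (C (i + 2) - C (i + 1)) := by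
  have hsum : ∑ i, (C (i + 1) - C i) = 0 := by
    rw [Finset.sum_sub_distrib,
      Fintype.sum_equiv (Equiv.addRight 1) (fun i => C (i + 1)) C fun _ => rfl, sub_self]
  simpa [add_assoc, one_add_one_eq_two] using
    two_pi_le_sum_angle_zmod _ (fun i => sub_ne_zero.2 (hC i)) hsum

/-- Fenchel's theorem, discrete case: the total curvature of a closed space polygon
is at least `2π`. -/
theorem fenchel_discrete
    (n : ℕ) [NeZero n] (hn : 3 ≤ n)
    (C : ZMod n → EuclideanSpace ℝ (Fin 3))
    (hC : ∀ i : ZMod n, C (i + 1) ≠ C i) :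
    2 * Real.pi ≤
      ∑ i : ZMod n,
        InnerProductGeometry.angle (C (i + 1) - C i) (C (i + 2) - C (i + 1)) :=
  fenchel_discrete_general n C hC
end

section
/- (Fenchel's theorem, smooth case.) Let L > 0 and let γ : ℝ → EuclideanSpace ℝ (Fin 3) be twice continuously differentiable, L-periodic (γ(t + L) = γ(t) for all t), and parametrized by arc length (‖γ'(t)‖ = 1 for all t). Then ∫_0^L ‖γ''(t)‖ dt ≥ 2π. -/
/-!
The unit tangent `T = γ'` is a closed curve on the unit sphere whose length is the total
curvature, and since `∫ T = γ L - γ 0 = 0` it lies in no open hemisphere. The angle between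
`T t` and a fixed point changes at most at speed `‖T'‖`: this is proved for `arccos ⟪u, T t⟫`
with `‖u‖ < 1`, where `arccos` is differentiable along the curve, and passes to `‖u‖ ≤ 1` by
closure. If the length `K` were below `2π`, split the curve at half length into arcs from
`p = T 0` to `q = T a` and back. Then `p` and `q` are not antipodal, both lie strictly on the
positive side of the hyperplane `(p + q)ᗮ`, and some point of the curve does not, so one of
the arcs meets the hyperplane at a point `x`. Since `angle p x + angle x q = π`, that arc has
length `K / 2 ≥ π`.
-/

open Real Set MeasureTheory intervalIntegral InnerProductGeometry
open scoped RealInnerProductSpace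

section SphereCurve

variable {E : Type*} [NormedAddCommGroup E] [InnerProductSpace ℝ E] {T T' : ℝ → E}

lemma abs_inner_le_norm_mul_sqrt_of_inner_eq_zero (u : E) {x v : E} (hx : ‖x‖ = 1)
    (hxv : ⟪x, v⟫ = 0) : |⟪u, v⟫| ≤ ‖v‖ * √(‖u‖ ^ 2 - ⟪u, x⟫ ^ 2) := by
  have hinner : ⟪u - ⟪u, x⟫ • x, v⟫ = ⟪u, v⟫ := by
    rw [inner_sub_left, real_inner_smul_left, hxv, mul_zero, sub_zero]
  have hnorm : ‖u - ⟪u, x⟫ • x‖ = √(‖u‖ ^ 2 - ⟪u, x⟫ ^ 2) := by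
    rw [← Real.sqrt_sq (norm_nonneg _), norm_sub_sq_real, real_inner_smul_right, norm_smul,
      Real.norm_eq_abs, mul_pow, sq_abs, hx]
    congr 1
    ring
  calc |⟪u, v⟫| = |⟪u - ⟪u, x⟫ • x, v⟫| := by rw [hinner]
    _ ≤ ‖u - ⟪u, x⟫ • x‖ * ‖v‖ := abs_real_inner_le_norm _ _
    _ = ‖v‖ * √(‖u‖ ^ 2 - ⟪u, x⟫ ^ 2) := by rw [hnorm, mul_comm]

lemma inner_eq_zero_of_hasDerivAt_of_norm_eq_one {f : ℝ → E} {f' : E} {t : ℝ}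
    (hf : HasDerivAt f f' t) (hnorm : ∀ s, ‖f s‖ = 1) : ⟪f t, f'⟫ = 0 := by
  have hconst : (‖f ·‖ ^ 2) = fun _ => (1 : ℝ) := by simp [hnorm]
  have h := hf.norm_sq
  rw [hconst] at h
  simpa using h.unique (hasDerivAt_const t 1)

lemma abs_arccos_inner_sub_le_integral_of_norm_lt_one
    (hT : ∀ t, HasDerivAt T (T' t) t) (hT' : Continuous T') (hnorm : ∀ t, ‖T t‖ = 1)
    {u : E} (hu : ‖u‖ < 1) {c d : ℝ} (hcd : c ≤ d) :
    |arccos ⟪u, T d⟫ - arccos ⟪u, T c⟫| ≤ ∫ t in c..d, ‖T' t‖ := by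
  have hlt : ∀ t, |⟪u, T t⟫| < 1 := fun t =>
    (abs_real_inner_le_norm u (T t)).trans_lt (by rwa [hnorm, mul_one])
  have hderiv : ∀ t, HasDerivAt (fun s => arccos ⟪u, T s⟫)
      (-(1 / √(1 - ⟪u, T t⟫ ^ 2)) * ⟪u, T' t⟫) t := by
    intro t
    have hinner : HasDerivAt (fun s => ⟪u, T s⟫) ⟪u, T' t⟫ t := by
      simpa using (hasDerivAt_const t u).inner ℝ (hT t)
    obtain ⟨hneg, hone⟩ := abs_lt.mp (hlt t)
    exact HasDerivAt.comp (h₂ := arccos) t (hasDerivAt_arccos hneg.ne' hone.ne) hinner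
  have hbound : ∀ t, ‖-(1 / √(1 - ⟪u, T t⟫ ^ 2)) * ⟪u, T' t⟫‖ ≤ ‖T' t‖ := by
    intro t
    have hpos : 0 < √(1 - ⟪u, T t⟫ ^ 2) := by
      have := sq_lt_one_iff_abs_lt_one _ |>.mpr (hlt t)
      exact Real.sqrt_pos.mpr (by linarith)
    rw [norm_mul, norm_neg, Real.norm_eq_abs, Real.norm_eq_abs, abs_of_pos (by positivity),
      one_div_mul_eq_div, div_le_iff₀ hpos]
    calc |⟪u, T' t⟫| ≤ ‖T' t‖ * √(‖u‖ ^ 2 - ⟪u, T t⟫ ^ 2) :=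
          abs_inner_le_norm_mul_sqrt_of_inner_eq_zero u (hnorm t)
            (inner_eq_zero_of_hasDerivAt_of_norm_eq_one (hT t) hnorm)
      _ ≤ ‖T' t‖ * √(1 - ⟪u, T t⟫ ^ 2) := by
          gcongr
          nlinarith [norm_nonneg u]
  have := image_norm_le_of_norm_deriv_right_le_deriv_boundary
    (f := fun s => arccos ⟪u, T s⟫ - arccos ⟪u, T c⟫)
    (B := fun s => ∫ t in c..s, ‖T' t‖)
    (fun t _ => ((hderiv t).sub_const _).continuousAt.continuousWithinAt)
    (fun t _ => ((hderiv t).sub_const _).hasDerivWithinAt) (by simp)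
    (fun t => (hT'.norm.integral_hasStrictDerivAt c t).hasDerivAt) (fun t _ => hbound t)
    ⟨hcd, le_rfl⟩
  simpa using this

lemma abs_arccos_inner_sub_le_integral
    (hT : ∀ t, HasDerivAt T (T' t) t) (hT' : Continuous T') (hnorm : ∀ t, ‖T t‖ = 1)
    {u : E} (hu : ‖u‖ ≤ 1) {c d : ℝ} (hcd : c ≤ d) :
    |arccos ⟪u, T d⟫ - arccos ⟪u, T c⟫| ≤ ∫ t in c..d, ‖T' t‖ := by
  have hset :
      IsClosed {u : E | |arccos ⟪u, T d⟫ - arccos ⟪u, T c⟫| ≤ ∫ t in c..d, ‖T' t‖} :=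
    isClosed_le (by fun_prop) continuous_const
  have hball : Metric.ball (0 : E) 1 ⊆ {u | _} := fun u hu =>
    abs_arccos_inner_sub_le_integral_of_norm_lt_one hT hT' hnorm (mem_ball_zero_iff.mp hu) hcd
  rw [← mem_closedBall_zero_iff, ← closure_ball 0 one_ne_zero] at hu
  exact hset.closure_subset_iff.mpr hball hu

lemma angle_le_integral_norm_deriv
    (hT : ∀ t, HasDerivAt T (T' t) t) (hT' : Continuous T') (hnorm : ∀ t, ‖T t‖ = 1)
    {c d : ℝ} (hcd : c ≤ d) : angle (T c) (T d) ≤ ∫ t in c..d, ‖T' t‖ := by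
  have h := abs_arccos_inner_sub_le_integral hT hT' hnorm (hnorm c).le hcd
  rw [real_inner_self_eq_norm_sq, hnorm, one_pow, arccos_one, sub_zero] at h
  simpa [angle, hnorm] using (le_abs_self _).trans h

lemma angle_add_angle_eq_pi_of_inner_add_eq_zero {p q x : E} (hpq : ‖p‖ = ‖q‖)
    (h : ⟪p + q, x⟫ = 0) : angle p x + angle x q = π := by
  rw [inner_add_left] at h
  rw [angle_comm x q, angle, angle, hpq, eq_neg_of_add_eq_zero_right h, neg_div, arccos_neg]
  ring

lemma inner_add_left_self_pos {p q : E} (h : ‖p‖ = ‖q‖) (hpq : p + q ≠ 0) :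
    0 < ⟪p + q, p⟫ := by
  have hsq : ⟪p + q, p⟫ = ‖p + q‖ ^ 2 / 2 := by
    rw [norm_add_sq_real, inner_add_left, real_inner_self_eq_norm_sq, real_inner_comm, ← h]
    ring
  rw [hsq]
  have := norm_pos_iff.mpr hpq
  positivity

lemma pi_le_integral_norm_deriv_of_inner_add_eq_zero
    (hT : ∀ t, HasDerivAt T (T' t) t) (hT' : Continuous T') (hnorm : ∀ t, ‖T t‖ = 1)
    {c s d : ℝ} (hs : s ∈ Icc c d) (h : ⟪T c + T d, T s⟫ = 0) :
    π ≤ ∫ t in c..d, ‖T' t‖ := by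
  calc π = angle (T c) (T s) + angle (T s) (T d) :=
        (angle_add_angle_eq_pi_of_inner_add_eq_zero (by rw [hnorm, hnorm]) h).symm
    _ ≤ (∫ t in c..s, ‖T' t‖) + ∫ t in s..d, ‖T' t‖ :=
        add_le_add (angle_le_integral_norm_deriv hT hT' hnorm hs.1)
          (angle_le_integral_norm_deriv hT hT' hnorm hs.2)
    _ = ∫ t in c..d, ‖T' t‖ := 
        integral_add_adjacent_intervals (hT'.norm.intervalIntegrable c s)
          (hT'.norm.intervalIntegrable s d)

lemma exists_inner_nonpos_of_integral_eq_zero [CompleteSpace E] (hT : Continuous T) {L : ℝ}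
    (hL : 0 < L) (h : ∫ t in 0..L, T t = 0) (m : E) : ∃ t ∈ Icc 0 L, ⟪m, T t⟫ ≤ 0 := by
  by_contra! hpos
  have hint : ∫ t in 0..L, ⟪m, T t⟫ = 0 := by
    simpa [h] using
      (innerSL ℝ m).intervalIntegral_comp_comm (hT.intervalIntegrable (μ := volume) 0 L)
  exact (intervalIntegral_pos_of_pos_on ((continuous_const.inner hT).intervalIntegrable 0 L)
    (fun t ht => hpos t (Ioo_subset_Icc_self ht)) hL).ne' hint

theorem two_pi_le_integral_norm_deriv
    (hT : ∀ t, HasDerivAt T (T' t) t) (hT' : Continuous T') (hnorm : ∀ t, ‖T t‖ = 1)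
    {L : ℝ} (hL : 0 ≤ L) (hclosed : T L = T 0)
    (hhemi : ∀ m, ∃ t ∈ Icc 0 L, ⟪m, T t⟫ ≤ 0) :
    2 * π ≤ ∫ t in 0..L, ‖T' t‖ := by
  set K := ∫ t in 0..L, ‖T' t‖
  by_contra! hK
  have hTc : Continuous T := continuous_iff_continuousAt.mpr fun t => (hT t).continuousAt
  obtain ⟨a, ha, hhalf⟩ : ∃ a ∈ Icc 0 L, ∫ t in 0..a, ‖T' t‖ = K / 2 := by
    refine intermediate_value_Icc hL
      (continuous_primitive (fun _ _ => hT'.norm.intervalIntegrable _ _) 0).continuousOn ?_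
    have : 0 ≤ K := integral_nonneg hL fun t _ => norm_nonneg _
    simp only [integral_same, mem_Icc]
    constructor <;> linarith
  have hhalf' : ∫ t in a..L, ‖T' t‖ = K / 2 := by
    rw [← integral_interval_sub_left (hT'.norm.intervalIntegrable 0 L)
      (hT'.norm.intervalIntegrable 0 a), hhalf]
    ring
  have hm : T 0 + T a ≠ 0 := by
    intro hm
    have : angle (T 0) (T a) = π := by
      rw [eq_neg_of_add_eq_zero_right hm,
        angle_self_neg_of_nonzero (norm_ne_zero_iff.mp (by simp [hnorm]))]
    linarith [angle_le_integral_norm_deriv hT hT' hnorm ha.1]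
  have hm0 : 0 < ⟪T 0 + T a, T 0⟫ := inner_add_left_self_pos (by rw [hnorm, hnorm]) hm
  have hma : 0 < ⟪T 0 + T a, T a⟫ := by
    rw [add_comm] at hm ⊢
    exact inner_add_left_self_pos (by rw [hnorm, hnorm]) hm
  have hmc : Continuous fun t => ⟪T 0 + T a, T t⟫ := continuous_const.inner hTc
  obtain ⟨t₀, ht₀, hmt₀⟩ := hhemi (T 0 + T a)
  rcases le_total t₀ a with ht₀a | hat₀
  · obtain ⟨s, hs, hms⟩ :=
      intermediate_value_Icc' ht₀.1 hmc.continuousOn ⟨hmt₀, hm0.le⟩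
    have := pi_le_integral_norm_deriv_of_inner_add_eq_zero hT hT' hnorm
      (⟨hs.1, hs.2.trans ht₀a⟩ : s ∈ Icc 0 a) hms
    linarith
  · obtain ⟨s, hs, hms⟩ :=
      intermediate_value_Icc' hat₀ hmc.continuousOn ⟨hmt₀, hma.le⟩
    have := pi_le_integral_norm_deriv_of_inner_add_eq_zero hT hT' hnorm
      (⟨hs.1, hs.2.trans ht₀.2⟩ : s ∈ Icc a L) (by rwa [hclosed, add_comm])
    linarith

end SphereCurve

/-- Fenchel's theorem, smooth case: the total curvature of a closed space curve
is at least `2π`. -/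
theorem fenchel_smooth
    (L : ℝ) (hL : 0 < L)
    (γ : ℝ → EuclideanSpace ℝ (Fin 3))
    (hsmooth : ContDiff ℝ 2 γ)
    (hper : ∀ t : ℝ, γ (t + L) = γ t)
    (hunit : ∀ t : ℝ, ‖deriv γ t‖ = 1) :
    2 * Real.pi ≤ ∫ t in (0 : ℝ)..L, ‖deriv (deriv γ) t‖ := by
  have hT : ContDiff ℝ 1 (deriv γ) := hsmooth.deriv' (n := 1)
  have hγ' : ∀ t, HasDerivAt γ (deriv γ t) t := fun t =>
    (hsmooth.differentiable (by norm_num) t).hasDerivAt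
  have hT' : ∀ t, HasDerivAt (deriv γ) (deriv (deriv γ) t) t := fun t =>
    (hT.differentiable one_ne_zero t).hasDerivAt
  have hclosed : deriv γ L = deriv γ 0 := by
    simpa [deriv_comp_add_const] using congrArg (deriv · 0) (funext hper)
  have hmean : ∫ t in 0..L, deriv γ t = 0 := by
    rw [integral_eq_sub_of_hasDerivAt (fun t _ => hγ' t) (hT.continuous.intervalIntegrable 0 L),
      ← hper 0, zero_add, sub_self]
  exact two_pi_le_integral_norm_deriv hT' (hT.continuous_deriv le_rfl) hunit hL.le hclosed
    (exists_inner_nonpos_of_integral_eq_zero hT.continuous hL hmean)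
end

section
/- (The tangent indicatrix of a closed polygon is not contained in an open hemisphere.) Let n ≥ 1 and let C : ZMod n → EuclideanSpace ℝ (Fin 3) be a closed polygon with C(i+1) ≠ C(i) for all i. Then there is no vector v ∈ EuclideanSpace ℝ (Fin 3) such that ⟨C(i+1) − C(i), v⟩ > 0 for all i ∈ ZMod n. -/
open scoped RealInnerProductSpace

theorem exists_inner_sub_nonpos {ι E : Type*} [Finite ι] [Nonempty ι] [NormedAddCommGroup E]
    [InnerProductSpace ℝ E] (σ : ι → ι) (C : ι → E) (v : E) :
    ∃ i, ⟪C (σ i) - C i, v⟫ ≤ 0 := by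
  obtain ⟨i, hi⟩ := Finite.exists_max fun i => ⟪C i, v⟫
  exact ⟨i, by simpa only [inner_sub_left, sub_nonpos] using hi (σ i)⟩

theorem tangent_indicatrix_not_in_open_hemisphere_discrete_general
    (n : ℕ) [NeZero n]
    (C : ZMod n → EuclideanSpace ℝ (Fin 3)) :
    ¬ ∃ v : EuclideanSpace ℝ (Fin 3), ∀ i : ZMod n, 0 < ⟪C (i + 1) - C i, v⟫ := by
  rintro ⟨v, hv⟩
  obtain ⟨i, hi⟩ := exists_inner_sub_nonpos (· + 1) C v
  exact (hv i).not_ge hi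

/-- The tangent indicatrix of a closed polygon is not contained in an open hemisphere:
there is no vector having positive inner product with every edge vector. -/
theorem tangent_indicatrix_not_in_open_hemisphere_discrete
    (n : ℕ) [NeZero n] (hn : 1 ≤ n)
    (C : ZMod n → EuclideanSpace ℝ (Fin 3))
    (hC : ∀ i : ZMod n, C (i + 1) ≠ C i) :
    ¬ ∃ v : EuclideanSpace ℝ (Fin 3), ∀ i : ZMod n, 0 < ⟪C (i + 1) - C i, v⟫ :=
  tangent_indicatrix_not_in_open_hemisphere_discrete_general n C
end

section
/- (Fenchel's theorem for curves of bounded total curvature.) Let L > 0 and let γ : ℝ → EuclideanSpace ℝ (Fin 3) be continuous, L-periodic, and nonconstant. Let S ⊆ ℝ be the set of all numbers of the form ∑_{i ∈ ZMod m} angle(γ(t_{i+1}) − γ(t_i), γ(t_{i+2}) − γ(t_{i+1})), taken over all m ≥ 3 and all cyclic sequences of parameters t_0 < t_1 < ⋯ < t_{m−1} < t_0 + L (indices read modulo m, with t_{i+m} := t_i + L) such that γ(t_{i+1}) ≠ γ(t_i) for all i. Then S is nonempty and every element of S is ≥ 2π; in particular the generalized total curvature sup S of γ is at least 2π. -/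
/-!
An inscribed polygon is a closed polygon with nonzero edges, so it suffices to show that such a
polygon turns by at least `2π`. This goes by induction on the number of vertices, starting from
the vacuous case of one vertex. If the polygon runs back and forth between two points, every
turning angle is `π`. Otherwise some vertex has distinct neighbours, and cutting it off does not
increase the total turning: with `b`, `c` the two edges at that vertex, the new edge `b + c` lies
angularly between them, so the triangle inequality for angles bounds the two new turning angles
by the three old ones. A nonconstant curve has an inscribed triangle by the intermediate value
theorem.
-/

open InnerProductGeometry Function Real Set

theorem Function.Periodic.sum_range_add {M : Type*} [AddCancelCommMonoid M] {g : ℕ → M}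
    {n : ℕ} (hg : Periodic g n) (s : ℕ) :
    ∑ i ∈ Finset.range n, g (i + s) = ∑ i ∈ Finset.range n, g i := by
  induction s with
  | zero => rfl
  | succ s ih =>
    have h := (Finset.sum_range_succ' (fun i => g (i + s)) n).symm.trans
      (Finset.sum_range_succ_comm (fun i => g (i + s)) n)
    simp only [add_right_comm _ 1 s, zero_add, add_comm n s, hg s, ih] at h
    exact add_right_cancel (h.trans (add_comm _ _))

theorem comp_mod_succ_ne {α : Type*} {R : ℕ → α} {m : ℕ} (hne : ∀ i, R (i + 1) ≠ R i)
    (hwrap : R 0 ≠ R m) (i : ℕ) : R ((i + 1) % (m + 1)) ≠ R (i % (m + 1)) := by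
  by_cases hi : i % (m + 1) = m
  · rw [Nat.succ_mod_succ_eq_zero_iff.mpr hi, hi]
    exact hwrap
  · have hlt := Nat.mod_lt i (by omega : 0 < m + 1)
    rw [← Nat.mod_add_mod, Nat.mod_eq_of_lt (by omega)]
    exact hne _

section Polygon

variable {V : Type*} [NormedAddCommGroup V] [InnerProductSpace ℝ V]

theorem InnerProductGeometry.angle_add_add_angle_add_le (a b d : V) {c : V} (hc : c ≠ 0) :
    angle a (b + c) + angle (b + c) d ≤ angle a b + angle b c + angle c d := by
  have h₁ := angle_le_angle_add_angle a b (b + c)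
  have h₂ := angle_le_angle_add_angle (b + c) c d
  have h₃ := angle_eq_angle_add_add_angle_add b hc
  rw [angle_comm c] at h₃
  linarith

noncomputable def totalTurning (P : ℕ → V) (n : ℕ) : ℝ :=
  ∑ i ∈ Finset.range n, angle (P (i + 1) - P i) (P (i + 2) - P (i + 1))

theorem totalTurning_add_right {P : ℕ → V} {n : ℕ} (hP : Periodic P n) (s : ℕ) :
    totalTurning (fun i => P (i + s)) n = totalTurning P n := by
  have hg : Periodic (fun i => angle (P (i + 1) - P i) (P (i + 2) - P (i + 1))) n := fun i => by
    simp only [add_right_comm i n, hP _]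
  simpa only [totalTurning, add_right_comm _ s] using hg.sum_range_add s

theorem totalTurning_of_forall_add_two_eq {P : ℕ → V} (hne : ∀ i, P (i + 1) ≠ P i)
    (hback : ∀ i, P (i + 2) = P i) (n : ℕ) : totalTurning P n = n * π := by
  have hterm : ∀ i, angle (P (i + 1) - P i) (P (i + 2) - P (i + 1)) = π := fun i => by
    rw [hback, ← neg_sub (P (i + 1)) (P i), angle_self_neg_of_nonzero (sub_ne_zero.2 (hne i))]
  simp [totalTurning, hterm]

/-- `fun i => R (i % (k + 2))` is the polygon `R` with its vertex `R (k + 2)` cut off. -/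
theorem totalTurning_comp_mod_le {R : ℕ → V} {k : ℕ} (hR : Periodic R (k + 3))
    (hc : R (k + 3) ≠ R (k + 2)) :
    totalTurning (fun i => R (i % (k + 2))) (k + 2) ≤ totalTurning R (k + 3) := by
  have hcorner := angle_add_add_angle_add_le (R (k + 1) - R k) (R (k + 2) - R (k + 1))
    (R (k + 4) - R (k + 3)) (sub_ne_zero.2 hc)
  rw [sub_add_sub_cancel'] at hcorner
  have hmod : ∀ i < k + 2, i % (k + 2) = i := fun i hi => Nat.mod_eq_of_lt hi
  have hk2 : (k + 2) % (k + 2) = 0 := Nat.mod_self _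
  have hk3 : (k + 3) % (k + 2) = 1 := by
    rw [show k + 3 = 1 + (k + 2) by ring, Nat.add_mod_right, Nat.mod_eq_of_lt (by omega)]
  have hsum : ∀ i ∈ Finset.range k, angle (R ((i + 1) % (k + 2)) - R (i % (k + 2)))
      (R ((i + 2) % (k + 2)) - R ((i + 1) % (k + 2)))
      = angle (R (i + 1) - R i) (R (i + 2) - R (i + 1)) := fun i hi => by
    rw [Finset.mem_range] at hi
    rw [hmod i (by omega), hmod (i + 1) (by omega), hmod (i + 2) (by omega)]
  have hR0 : R 0 = R (k + 3) := (hR 0).symm.trans (by rw [zero_add])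
  have hR1 : R 1 = R (k + 4) := (hR 1).symm.trans (by rw [add_comm])
  simp only [totalTurning, Finset.sum_range_succ, Finset.sum_congr rfl hsum, add_assoc,
    Nat.reduceAdd, hk2, hk3, hmod k (by omega), hmod (k + 1) (by omega), hR0, hR1]
  linarith

theorem two_pi_le_totalTurning {P : ℕ → V} {n : ℕ} (hn : 0 < n) (hP : Periodic P n)
    (hne : ∀ i, P (i + 1) ≠ P i) : 2 * π ≤ totalTurning P n := by
  induction n, hn using Nat.le_induction generalizing P with
  | base => exact absurd (by simpa using hP 0) (hne 0)
  | succ n hn ih =>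
    by_cases hback : ∀ i, P (i + 2) = P i
    · rw [totalTurning_of_forall_add_two_eq hne hback]
      have h2 : (2 : ℝ) ≤ (n + 1 : ℕ) := by exact_mod_cast Nat.succ_le_succ hn
      nlinarith [pi_pos]
    obtain ⟨j, hj⟩ := not_forall.1 hback
    have hn2 : n ≠ 1 := by
      rintro rfl
      exact hj (hP j)
    obtain ⟨k, rfl⟩ : ∃ k, n = k + 2 := ⟨n - 2, by omega⟩
    -- rotate so that the vertex with distinct neighbours, `P (j + 1)`, becomes `R (k + 2)`
    set R : ℕ → V := fun i => P (i + (j + 2))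
    have hR : Periodic R (k + 3) := fun i => by simp only [R, add_right_comm i, hP _]
    have hRne : ∀ i, R (i + 1) ≠ R i := fun i => by
      simpa only [R, add_right_comm i 1] using hne (i + (j + 2))
    have hwrap : R 0 ≠ R (k + 1) := by
      simpa only [R, zero_add, show k + 1 + (j + 2) = j + (k + 3) by ring, hP j] using hj
    rw [← totalTurning_add_right hP (j + 2)]
    exact (ih ((Nat.periodic_mod _).comp R) (comp_mod_succ_ne hRne hwrap)).trans
      (totalTurning_comp_mod_le hR (hRne _))

end Polygon

theorem Function.Periodic.exists_three_distinct_in_period {α : Type*} [MetricSpace α]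
    {γ : ℝ → α} {L : ℝ} (hL : 0 < L) (hcont : Continuous γ) (hper : Periodic γ L)
    (hnc : ∃ a b, γ a ≠ γ b) :
    ∃ a b c, a < b ∧ b < c ∧ c < a + L ∧ γ b ≠ γ a ∧ γ c ≠ γ b ∧ γ a ≠ γ c := by
  obtain ⟨a, b₀, hab₀⟩ := hnc
  obtain ⟨b, hb, hb₀⟩ := hper.exists_mem_Ico hL b₀ a
  have hba : γ b ≠ γ a := hb₀ ▸ hab₀.symm
  have hab : a < b := hb.1.lt_of_ne (by rintro rfl; exact hba rfl)
  have hd : 0 < dist (γ b) (γ a) := dist_pos.2 hba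
  -- at `c` the distance to `γ a` is half its value at `b`, so `γ c` is neither `γ a` nor `γ b`
  obtain ⟨c, ⟨hbc, hcL⟩, hc : dist (γ c) (γ a) = _⟩ := intermediate_value_Ioo' hb.2.le
    (hcont.dist continuous_const).continuousOn
    (show dist (γ b) (γ a) / 2 ∈ Ioo (dist (γ (a + L)) (γ a)) (dist (γ b) (γ a)) by
      rw [hper a, dist_self]; constructor <;> linarith)
  refine ⟨a, b, c, hab, hbc, hcL, hba, fun h => ?_, fun h => ?_⟩
  · rw [h] at hc; linarith
  · rw [← h, dist_self] at hc; linarith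

theorem Function.Periodic.exists_inscribed_triangle {α : Type*} {γ : ℝ → α} {L a b c : ℝ}
    (hper : Periodic γ L) (hab : a < b) (hbc : b < c) (hca : c < a + L)
    (h₁ : γ b ≠ γ a) (h₂ : γ c ≠ γ b) (h₃ : γ a ≠ γ c) :
    ∃ t : ℕ → ℝ, (∀ i, t (i + 3) = t i + L) ∧ (∀ i, t i < t (i + 1)) ∧
      ∀ i, γ (t (i + 1)) ≠ γ (t i) := by
  set x : ℕ → ℝ := fun r => if r = 0 then a else if r = 1 then b else c
  have hγ : ∀ i, γ (x (i % 3) + (i / 3 : ℕ) * L) = γ (x (i % 3)) := fun i =>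
    hper.nat_mul (i / 3) _
  refine ⟨fun i => x (i % 3) + (i / 3 : ℕ) * L, fun i => ?_, fun i => ?_, fun i => ?_⟩
  · simp only [show (i + 3) % 3 = i % 3 by omega, show (i + 3) / 3 = i / 3 + 1 by omega]
    push_cast
    ring
  · obtain h | h | h : i % 3 = 0 ∨ i % 3 = 1 ∨ i % 3 = 2 := by omega
    · simp only [x, h, show (i + 1) % 3 = 1 by omega, show (i + 1) / 3 = i / 3 by omega]
      simpa using hab
    · simp only [x, h, show (i + 1) % 3 = 2 by omega, show (i + 1) / 3 = i / 3 by omega]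
      simpa using hbc
    · simp only [x, h, show (i + 1) % 3 = 0 by omega, show (i + 1) / 3 = i / 3 + 1 by omega]
      push_cast
      linarith
  · simp only [hγ]
    obtain h | h | h : i % 3 = 0 ∨ i % 3 = 1 ∨ i % 3 = 2 := by omega
    · simpa [x, h, show (i + 1) % 3 = 1 by omega] using h₁
    · simpa [x, h, show (i + 1) % 3 = 2 by omega] using h₂
    · simpa [x, h, show (i + 1) % 3 = 0 by omega] using h₃

/-- Fenchel's theorem for curves of bounded total curvature: for a nonconstant
continuous closed space curve, the set of total curvatures of inscribed closed
polygons is nonempty and every inscribed closed polygon has total curvature at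
least `2π`; in particular the generalized total curvature is at least `2π`. -/
theorem fenchel_generalized
    (L : ℝ) (hL : 0 < L)
    (γ : ℝ → EuclideanSpace ℝ (Fin 3))
    (hcont : Continuous γ)
    (hper : ∀ t : ℝ, γ (t + L) = γ t)
    (hnonconst : ∃ a b : ℝ, γ a ≠ γ b) :
    ({s : ℝ | ∃ m : ℕ, 3 ≤ m ∧ ∃ t : ℕ → ℝ,
        (∀ i : ℕ, t (i + m) = t i + L) ∧
        (∀ i : ℕ, t i < t (i + 1)) ∧
        (∀ i : ℕ, γ (t (i + 1)) ≠ γ (t i)) ∧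
        s = ∑ i ∈ Finset.range m,
          InnerProductGeometry.angle (γ (t (i + 1)) - γ (t i)) (γ (t (i + 2)) - γ (t (i + 1)))}).Nonempty
    ∧ ∀ s ∈ {s : ℝ | ∃ m : ℕ, 3 ≤ m ∧ ∃ t : ℕ → ℝ,
        (∀ i : ℕ, t (i + m) = t i + L) ∧
        (∀ i : ℕ, t i < t (i + 1)) ∧
        (∀ i : ℕ, γ (t (i + 1)) ≠ γ (t i)) ∧
        s = ∑ i ∈ Finset.range m,
          InnerProductGeometry.angle (γ (t (i + 1)) - γ (t i)) (γ (t (i + 2)) - γ (t (i + 1)))},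
      2 * Real.pi ≤ s := by
  have hγ : Periodic γ L := hper
  refine ⟨?_, ?_⟩
  · obtain ⟨a, b, c, hab, hbc, hca, h₁, h₂, h₃⟩ :=
      hγ.exists_three_distinct_in_period hL hcont hnonconst
    obtain ⟨t, ht_per, ht_mono, ht_ne⟩ := hγ.exists_inscribed_triangle hab hbc hca h₁ h₂ h₃
    exact ⟨_, 3, le_rfl, t, ht_per, ht_mono, ht_ne, rfl⟩
  · rintro s ⟨m, hm, t, ht_per, -, ht_ne, rfl⟩
    show 2 * π ≤ totalTurning (fun i => γ (t i)) m
    exact two_pi_le_totalTurning (by omega)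
      (fun i => (congrArg γ (ht_per i)).trans (hper (t i))) ht_ne
end

section
/- (Higher-dimensional total vertex curvature: the normal cones of a polytope tile the sphere.) Let n ≥ 1 and let N ⊆ EuclideanSpace ℝ (Fin n) be a compact convex set with nonempty interior whose set of extreme points is finite. For each extreme point p of N, let β_p = μH^{n−1}({v ∈ S^{n−1} : ∀ x ∈ N, ⟨v, x − p⟩ ≤ 0}), where S^{n−1} = Metric.sphere (0 : EuclideanSpace ℝ (Fin n)) 1 and μH^{n−1} is the (n−1)-dimensional Hausdorff measure. Then ∑_{p ∈ extremePoints N} β_p = μH^{n−1}(S^{n−1}), the total area ω_{n−1} of the unit sphere. -/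
/-!
Every unit vector `v` lies in the normal cone of some vertex: the face of `N` on which `⟪v, ·⟫`
is maximal is a nonempty compact exposed face, so it has an extreme point, which is then an
extreme point of `N`. Two distinct vertices `p ≠ q` have normal cones meeting only inside the
hyperplane `q - p = 0`, whose trace on the sphere is a lower-dimensional sphere and hence
`μH[n - 1]`-null. So the normal cones cut the sphere into finitely many closed pieces that are
almost disjoint, and the measures add up.
-/

open scoped RealInnerProductSpace MeasureTheory

open MeasureTheory Module

variable {E : Type*} [NormedAddCommGroup E] [InnerProductSpace ℝ E]

def normalCone (N : Set E) (p : E) : Set E := {v | ∀ x ∈ N, ⟪v, x - p⟫ ≤ 0}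

lemma isClosed_normalCone (N : Set E) (p : E) : IsClosed (normalCone N p) := by
  simp only [normalCone, Set.ofPred_forall]
  exact isClosed_biInter fun x _ =>
    isClosed_le (continuous_id.inner continuous_const) continuous_const

lemma inner_sub_eq_zero_of_mem_normalCone {N : Set E} {p q v : E} (hp : p ∈ N) (hq : q ∈ N)
    (hvp : v ∈ normalCone N p) (hvq : v ∈ normalCone N q) : ⟪q - p, v⟫ = 0 := by
  have hqp := hvp q hq
  have hpq := hvq p hp
  rw [inner_sub_right] at hqp hpq
  rw [inner_sub_left, real_inner_comm v q, real_inner_comm v p]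
  linarith

lemma IsCompact.exists_mem_extremePoints_mem_normalCone {N : Set E} (hcomp : IsCompact N)
    (hne : N.Nonempty) (v : E) : ∃ p ∈ Set.extremePoints ℝ N, v ∈ normalCone N p := by
  obtain ⟨z, hzN, hz⟩ :=
    hcomp.exists_isMaxOn hne (continuous_const.inner (𝕜 := ℝ) continuous_id).continuousOn
  set F := {x ∈ N | ∀ y ∈ N, ⟪v, y⟫ ≤ ⟪v, x⟫}
  have hexp : IsExposed ℝ N F := fun _ => ⟨innerSL ℝ v, rfl⟩
  have hFcomp : IsCompact F := hcomp.of_isClosed_subset (hexp.isClosed hcomp.isClosed)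
    fun x hx => hx.1
  obtain ⟨p, hp⟩ := hFcomp.extremePoints_nonempty ⟨z, hzN, fun y hy => hz hy⟩
  refine ⟨p, hexp.isExtreme.extremePoints_subset_extremePoints hp, fun x hx => ?_⟩
  have hle := hp.1.2 x hx
  rw [inner_sub_right]
  linarith

variable [FiniteDimensional ℝ E] [MeasurableSpace E] [BorelSpace E]

/-- The trace of a hyperplane through the centre is a sphere of one dimension less. -/
lemma hausdorffMeasure_sphere_inter_orthogonal_eq_zero {w : E} (hw : w ≠ 0) {r : ℝ}
    (hr : r ≠ 0) :
    μH[(finrank ℝ E : ℝ) - 1] (Metric.sphere 0 r ∩ {v | ⟪w, v⟫ = 0}) = 0 := by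
  set W := (ℝ ∙ w)ᗮ
  have himage : Metric.sphere (0 : E) r ∩ {v | ⟪w, v⟫ = 0}
      = Subtype.val '' (Metric.sphere (0 : W) r) := by
    ext v
    simp only [Set.mem_inter_iff, mem_sphere_iff_norm, sub_zero, Set.mem_ofPred_eq,
      Set.mem_image, Subtype.exists, Submodule.coe_norm, exists_and_right, exists_eq_right,
      W, Submodule.mem_orthogonal_singleton_iff_inner_right]
    tauto
  have hfinrank : finrank ℝ W + 1 = finrank ℝ E := by
    rw [← finrank_span_singleton (K := ℝ) hw, add_comm]
    exact Submodule.finrank_add_finrank_orthogonal _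
  have hdim : (finrank ℝ E : ℝ) - 1 = finrank ℝ W := by
    rw [← hfinrank]
    push_cast
    ring
  rw [himage, hdim, isometry_subtype_coe.hausdorffMeasure_image (Or.inl (Nat.cast_nonneg _))]
  exact Measure.addHaar_sphere_of_ne_zero _ _ hr

theorem sum_hausdorffMeasure_sphere_inter_normalCone {N : Set E} (hcomp : IsCompact N)
    (hne : N.Nonempty) (hfin : (Set.extremePoints ℝ N).Finite) {r : ℝ} (hr : r ≠ 0) :
    ∑ p ∈ hfin.toFinset, μH[(finrank ℝ E : ℝ) - 1] (Metric.sphere 0 r ∩ normalCone N p)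
      = μH[(finrank ℝ E : ℝ) - 1] (Metric.sphere (0 : E) r) := by
  have hcover :
      Metric.sphere (0 : E) r = ⋃ p ∈ hfin.toFinset, Metric.sphere 0 r ∩ normalCone N p := by
    refine subset_antisymm (fun v hv => ?_)
      (Set.iUnion₂_subset fun _ _ => Set.inter_subset_left)
    obtain ⟨p, hp, hvp⟩ := hcomp.exists_mem_extremePoints_mem_normalCone hne v
    exact Set.mem_biUnion (hfin.mem_toFinset.mpr hp) ⟨hv, hvp⟩
  have hdisjoint : Set.Pairwise hfin.toFinset fun p q => μH[(finrank ℝ E : ℝ) - 1]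
      ((Metric.sphere 0 r ∩ normalCone N p) ∩ (Metric.sphere 0 r ∩ normalCone N q)) = 0 := by
    intro p hp q hq hpq
    rw [Finset.mem_coe, Set.Finite.mem_toFinset] at hp hq
    refine measure_mono_null ?_
      (hausdorffMeasure_sphere_inter_orthogonal_eq_zero (sub_ne_zero.mpr hpq.symm) hr)
    exact fun v hv => ⟨hv.1.1, inner_sub_eq_zero_of_mem_normalCone hp.1 hq.1 hv.1.2 hv.2.2⟩
  conv_rhs => rw [hcover]
  exact (measure_biUnion_finset₀ hdisjoint fun p _ =>
    (Metric.isClosed_sphere.inter (isClosed_normalCone N p)).measurableSet.nullMeasurableSet).symm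

theorem total_vertex_curvature_of_polytope_highdim_general
    (n : ℕ)
    (N : Set (EuclideanSpace ℝ (Fin n)))
    (hcomp : IsCompact N) (hint : (interior N).Nonempty)
    (hfin : (Set.extremePoints ℝ N).Finite) :
    ∑ p ∈ hfin.toFinset,
        μH[(n : ℝ) - 1] {v : EuclideanSpace ℝ (Fin n) |
          v ∈ Metric.sphere (0 : EuclideanSpace ℝ (Fin n)) 1 ∧ ∀ x ∈ N, ⟪v, x - p⟫ ≤ 0}
      = μH[(n : ℝ) - 1] (Metric.sphere (0 : EuclideanSpace ℝ (Fin n)) 1) := by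
  have htiling := sum_hausdorffMeasure_sphere_inter_normalCone hcomp
    (hint.mono interior_subset) hfin one_ne_zero
  rw [finrank_euclideanSpace_fin] at htiling
  exact htiling

/-- Higher-dimensional total vertex curvature: the normal cones at the vertices of a
convex polytope in `ℝⁿ` tile the unit sphere, so the sum of the external angles at
the vertices equals the total area of the unit sphere `S^{n-1}`. -/
theorem total_vertex_curvature_of_polytope_highdim
    (n : ℕ) (hn : 1 ≤ n)
    (N : Set (EuclideanSpace ℝ (Fin n)))
    (hcomp : IsCompact N) (hconv : Convex ℝ N) (hint : (interior N).Nonempty)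
    (hfin : (Set.extremePoints ℝ N).Finite) :
    ∑ p ∈ hfin.toFinset,
        μH[(n : ℝ) - 1] {v : EuclideanSpace ℝ (Fin n) |
          v ∈ Metric.sphere (0 : EuclideanSpace ℝ (Fin n)) 1 ∧ ∀ x ∈ N, ⟪v, x - p⟫ ≤ 0}
      = μH[(n : ℝ) - 1] (Metric.sphere (0 : EuclideanSpace ℝ (Fin n)) 1) :=
  total_vertex_curvature_of_polytope_highdim_general n N hcomp hint hfin
end

section
/- (Continuity of volume with respect to the Hausdorff metric on convex bodies.) Let n ≥ 1, and let K : ℕ → Set (EuclideanSpace ℝ (Fin n)) be a sequence of nonempty compact convex sets and N a nonempty compact convex set such that the Hausdorff distance between K_j and N tends to 0 as j → ∞. Then volume (K_j) tends to volume N, where volume denotes the Lebesgue measure on EuclideanSpace ℝ (Fin n). -/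
/-!
A convex body `K` is recovered from any of its thickenings: if `x ∉ K`, pushing `x` a distance `ε`
away from a separating hyperplane gives a point at distance more than `ε` from `K`, so a ball of
radius `r > ε` around `x` is never inside the `ε`-thickening of `K`. Hence, once the Hausdorff
distance is below `ε`, `K j` contains every compact set whose `r`-thickening lies in `interior N`,
and is contained in the closed `ε`-thickening of `N`. Inner regularity of volume on the open set
`interior N`, whose volume is that of `N` because the boundary of a convex set is null, and
continuity of volume along the thickenings of the compact set `N` give the two bounds.
-/

open MeasureTheory Metric Filter Set RealInnerProductSpace Topology

section Separation

variable {E : Type*} [NormedAddCommGroup E] [InnerProductSpace ℝ E] [CompleteSpace E]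
  {K : Set E} {x : E}

theorem Convex.exists_norm_eq_one_inner_lt_of_notMem (hK : Convex ℝ K) (hKc : IsClosed K)
    (hKne : K.Nonempty) (hx : x ∉ K) : ∃ w : E, ‖w‖ = 1 ∧ ∀ k ∈ K, ⟪w, k⟫ < ⟪w, x⟫ := by
  obtain ⟨f, u, hfK, hfx⟩ := geometric_hahn_banach_closed_point hK hKc hx
  set v := (InnerProductSpace.toDual ℝ E).symm f
  have hf : ∀ y, f y = ⟪v, y⟫ := fun y => InnerProductSpace.toDual_symm_apply.symm
  have hv : v ≠ 0 := by
    intro hv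
    obtain ⟨k, hk⟩ := hKne
    have := (hfK k hk).trans hfx
    simp only [hf, hv, inner_zero_left, lt_self_iff_false] at this
  refine ⟨‖v‖⁻¹ • v, norm_smul_inv_norm hv, fun k hk => ?_⟩
  simp only [real_inner_smul_left, ← hf]
  exact mul_lt_mul_of_pos_left ((hfK k hk).trans hfx) (by positivity)

theorem Convex.exists_dist_eq_forall_lt_dist (hK : Convex ℝ K) (hKc : IsClosed K)
    (hKne : K.Nonempty) (hx : x ∉ K) {t : ℝ} (ht : 0 ≤ t) :
    ∃ z, dist z x = t ∧ ∀ k ∈ K, t < dist z k := by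
  obtain ⟨w, hw, hwK⟩ := hK.exists_norm_eq_one_inner_lt_of_notMem hKc hKne hx
  refine ⟨x + t • w, by simp [norm_smul, hw, abs_of_nonneg ht], fun k hk => ?_⟩
  calc t < ⟪w, x - k⟫ + t := by have := hwK k hk; rw [inner_sub_right]; linarith
    _ = ⟪w, x + t • w - k⟫ := by
      rw [add_sub_right_comm, inner_add_right, real_inner_smul_right, real_inner_self_eq_norm_sq,
        hw]; ring
    _ ≤ dist (x + t • w) k := by
      rw [dist_eq_norm]; simpa [hw] using real_inner_le_norm w (x + t • w - k)

theorem Convex.subset_of_thickening_subset_thickening {C : Set E} {ε r : ℝ} (hK : Convex ℝ K)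
    (hKc : IsClosed K) (hε : 0 ≤ ε) (hεr : ε < r)
    (h : Metric.thickening r C ⊆ Metric.thickening ε K) : C ⊆ K := by
  intro x hxC
  by_contra hxK
  have hKne : K.Nonempty := by
    obtain ⟨k, hk, -⟩ := mem_thickening_iff.1 (h (self_subset_thickening (hε.trans_lt hεr) C hxC))
    exact ⟨k, hk⟩
  obtain ⟨z, hzx, hzK⟩ := hK.exists_dist_eq_forall_lt_dist hKc hKne hxK hε
  obtain ⟨k, hk, hzk⟩ := mem_thickening_iff.1 (h (mem_thickening_iff.2 ⟨x, hxC, hzx.trans_lt hεr⟩))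
  exact (hzK k hk).not_gt hzk

end Separation

theorem Metric.subset_thickening_of_hausdorffDist_lt {α : Type*} [PseudoMetricSpace α]
    {s t : Set α} {r : ℝ} (hr : hausdorffDist s t < r) (hfin : hausdorffEDist s t ≠ ⊤) :
    s ⊆ thickening r t :=
  fun _ hx => mem_thickening_iff.2 (exists_dist_lt_of_hausdorffDist_lt hx hr hfin)

theorem IsCompact.exists_pos_measure_cthickening_lt {α : Type*} [MetricSpace α]
    [MeasurableSpace α] [OpensMeasurableSpace α] [ProperSpace α] {μ : Measure α}
    [IsFiniteMeasureOnCompacts μ] {s : Set α} (hs : IsCompact s) {b : ENNReal} (hb : μ s < b) :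
    ∃ ε > 0, μ (cthickening ε s) < b := by
  have hlt : ∀ᶠ ε in 𝓝[>] 0, μ (cthickening ε s) < b :=
    ((tendsto_measure_cthickening_of_isCompact hs).eventually_lt_const hb).filter_mono
      nhdsWithin_le_nhds
  exact ((eventually_mem_nhdsWithin (s := Ioi 0)).and hlt).exists

theorem volume_continuous_in_hausdorff_metric_general
    (n : ℕ)
    (K : ℕ → Set (EuclideanSpace ℝ (Fin n)))
    (N : Set (EuclideanSpace ℝ (Fin n)))
    (hKne : ∀ j, (K j).Nonempty) (hKcomp : ∀ j, IsCompact (K j))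
    (hKconv : ∀ j, Convex ℝ (K j))
    (hNne : N.Nonempty) (hNcomp : IsCompact N) (hNconv : Convex ℝ N)
    (hdist : Filter.Tendsto (fun j => Metric.hausdorffDist (K j) N)
      Filter.atTop (nhds 0)) :
    Filter.Tendsto (fun j => volume (K j)) Filter.atTop (nhds (volume N)) := by
  have hfin j : hausdorffEDist (K j) N ≠ ⊤ :=
    hausdorffEDist_ne_top_of_nonempty_of_bounded (hKne j) hNne (hKcomp j).isBounded
      hNcomp.isBounded
  have hclose {ε : ℝ} (hε : 0 < ε) :
      ∀ᶠ j in atTop, K j ⊆ thickening ε N ∧ N ⊆ thickening ε (K j) := by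
    filter_upwards [hdist.eventually_lt_const hε] with j hj
    refine ⟨subset_thickening_of_hausdorffDist_lt hj (hfin j), ?_⟩
    rw [hausdorffDist_comm] at hj
    exact subset_thickening_of_hausdorffDist_lt hj (by rw [hausdorffEDist_comm]; exact hfin j)
  refine tendsto_order.2 ⟨fun a ha => ?_, fun b hb => ?_⟩
  · rw [← measure_interior_of_null_frontier (hNconv.addHaar_frontier volume)] at ha
    obtain ⟨C, hCN, hC, haC⟩ := isOpen_interior.exists_lt_isCompact ha
    obtain ⟨r, hr, hCr⟩ := hC.exists_thickening_subset_open isOpen_interior hCN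
    filter_upwards [hclose (half_pos hr)] with j hj
    have hCK : C ⊆ K j := (hKconv j).subset_of_thickening_subset_thickening (hKcomp j).isClosed
      (half_pos hr).le (half_lt_self hr) (hCr.trans (interior_subset.trans hj.2))
    exact haC.trans_le (measure_mono hCK)
  · obtain ⟨ε, hε, hεb⟩ := hNcomp.exists_pos_measure_cthickening_lt hb
    filter_upwards [hclose hε] with j hj
    exact (measure_mono (hj.1.trans (thickening_subset_cthickening ε N))).trans_lt hεb

/-- Continuity of volume with respect to the Hausdorff metric on convex bodies:
if a sequence of convex bodies converges to a convex body in the Hausdorff distance,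
then their volumes converge. -/
theorem volume_continuous_in_hausdorff_metric
    (n : ℕ) (hn : 1 ≤ n)
    (K : ℕ → Set (EuclideanSpace ℝ (Fin n)))
    (N : Set (EuclideanSpace ℝ (Fin n)))
    (hKne : ∀ j, (K j).Nonempty) (hKcomp : ∀ j, IsCompact (K j))
    (hKconv : ∀ j, Convex ℝ (K j))
    (hNne : N.Nonempty) (hNcomp : IsCompact N) (hNconv : Convex ℝ N)
    (hdist : Filter.Tendsto (fun j => Metric.hausdorffDist (K j) N)
      Filter.atTop (nhds 0)) :
    Filter.Tendsto (fun j => volume (K j)) Filter.atTop (nhds (volume N)) :=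
  volume_continuous_in_hausdorff_metric_general n K N hKne hKcomp hKconv hNne hNcomp hNconv hdist
end

section
/- (Equality case of Fenchel, necessity of planarity.) Let n ≥ 3 and let C : ZMod n → EuclideanSpace ℝ (Fin 3) be a closed polygon with C(i+1) ≠ C(i) for all i, such that ∑_{i ∈ ZMod n} κ_i = 2π, where κ_i = angle(C(i+1) − C(i), C(i+2) − C(i+1)) ∈ [0, π] is the unoriented angle between consecutive edge vectors. Then the polygon is planar: there exists an affine subspace A of EuclideanSpace ℝ (Fin 3) whose direction has dimension at most 2 such that C(i) ∈ A for all i. -/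
/-!
Encode a closed polygon by its list of edge vectors: nonzero vectors summing to zero. Merging two
consecutive edges `a, b` into the single edge `s = a + b` does not increase the total curvature:
the turn `∠(a, b)` splits as `∠(a, s) + ∠(s, b)`, and by the triangle inequality for angles the new
turns satisfy `∠(p, s) ≤ ∠(p, a) + ∠(a, s)` and `∠(s, q) ≤ ∠(s, b) + ∠(b, q)`, where `p` and `q`
are the edges before and after. Merging down to two edges `a, -a`, of curvature `2π`, gives
Fenchel's inequality; if neither of two consecutive pairs can be merged (both sums vanish), two
consecutive turns are already `π` each.

If the curvature is exactly `2π`, the merged polygon also has curvature `2π`, so by induction it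
is planar, and both triangle inequalities are equalities. Equality in `∠(x, z) ≤ ∠(x, y) + ∠(y, z)`
with `∠(x, z) < π` puts `y` in the plane of `x` and `z`, which brings `a` (or `b`) back into the
plane. If instead both `p` and `q` point against `s`, the remaining turns must all vanish, so the
remaining edges are parallel to `q` and everything lies in the plane of `a` and `b`.
-/

open InnerProductGeometry Real

lemma ZMod.sum_eq_sum_range {M : Type*} [AddCommMonoid M] {n : ℕ} [NeZero n] (g : ZMod n → M) :
    ∑ i, g i = ∑ k ∈ Finset.range n, g k :=
  Finset.sum_nbij' ZMod.val Nat.cast (fun i _ => Finset.mem_range.2 (ZMod.val_lt i))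
    (fun _ _ => Finset.mem_univ _) (fun i _ => ZMod.natCast_zmod_val i)
    (fun _ hk => ZMod.val_cast_of_lt (Finset.mem_range.1 hk))
    (fun i _ => by rw [ZMod.natCast_zmod_val])

lemma finrank_span_pair_le {K V : Type*} [DivisionRing K] [AddCommGroup V] [Module K V]
    (x y : V) : Module.finrank K (Submodule.span K {x, y}) ≤ 2 := by
  classical
  have := finrank_span_finset_le_card (R := K) ({x, y} : Finset V)
  simp only [Finset.coe_insert, Finset.coe_singleton] at this
  exact this.trans Finset.card_le_two

lemma InnerProductGeometry.mem_of_angle_eq_angle_add_angle {V : Type*} [NormedAddCommGroup V]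
    [InnerProductSpace ℝ V] {x y z : V} {W : Submodule ℝ V} (hx : x ∈ W) (hz : z ∈ W)
    (hy : y ≠ 0) (h : angle x z = angle x y + angle y z) (hxz : angle x z ≠ π) : y ∈ W := by
  obtain ⟨kx, kz, rfl⟩ :=
    Submodule.mem_span_pair.1 (((angle_eq_angle_add_angle_iff hy).1 h).resolve_left hxz)
  exact W.add_mem (W.smul_of_tower_mem kx hx) (W.smul_of_tower_mem kz hz)

namespace Fenchel

section EdgeLists

variable {V : Type*} [AddCommMonoid V]

def IsClosedPolygon (l : List V) : Prop := (∀ v ∈ l, v ≠ 0) ∧ l.sum = 0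

def IsPlanar [Module ℝ V] (l : List V) : Prop :=
  ∃ x y : V, ∀ v ∈ l, v ∈ Submodule.span ℝ {x, y}

lemma IsClosedPolygon.rotate {l : List V} (hl : IsClosedPolygon l) (k : ℕ) :
    IsClosedPolygon (l.rotate k) :=
  ⟨fun v hv => hl.1 v (List.mem_rotate.1 hv), (List.rotate_perm l k).sum_eq.trans hl.2⟩

lemma IsClosedPolygon.merge {a b : V} {t : List V} (hl : IsClosedPolygon (a :: b :: t))
    (hab : a + b ≠ 0) : IsClosedPolygon ((a + b) :: t) := by
  refine ⟨?_, by simpa [add_assoc] using hl.2⟩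
  rintro v (_ | ⟨_, hv⟩)
  · exact hab
  · exact hl.1 v (List.mem_cons_of_mem _ (List.mem_cons_of_mem _ hv))

lemma IsPlanar.of_rotate [Module ℝ V] {l : List V} {k : ℕ} (h : IsPlanar (l.rotate k)) :
    IsPlanar l :=
  let ⟨x, y, hxy⟩ := h
  ⟨x, y, fun v hv => hxy v (List.mem_rotate.2 hv)⟩

lemma exists_rotate_add_ne_zero_or (a b q : V) (t : List V) :
    (∃ k a' b' q' t', (a :: b :: q :: t).rotate k = a' :: b' :: q' :: t' ∧ a' + b' ≠ 0) ∨
      (a + b = 0 ∧ b + q = 0) := by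
  by_cases hab : a + b = 0
  · by_cases hbq : b + q = 0
    · exact .inr ⟨hab, hbq⟩
    · refine .inl ?_
      rcases t with _ | ⟨c, t⟩
      · exact ⟨1, b, q, a, [], rfl, hbq⟩
      · exact ⟨1, b, q, c, t ++ [a], rfl, hbq⟩
  · exact .inl ⟨0, a, b, q, t, List.rotate_zero _, hab⟩

lemma length_merge_lt_of_rotate_eq {l : List V} {k : ℕ} {a b : V} {t : List V}
    (h : l.rotate k = a :: b :: t) : ((a + b) :: t).length < l.length := by
  have := congrArg List.length h
  simp only [List.length_rotate, List.length_cons] at this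
  simp only [List.length_cons]
  omega

end EdgeLists

variable {V : Type*} [NormedAddCommGroup V] [InnerProductSpace ℝ V]

noncomputable def angleChain : V → List V → ℝ
  | _, [] => 0
  | p, b :: t => angle p b + angleChain b t

noncomputable def totalCurvature : List V → ℝ
  | [] => 0
  | a :: t => angleChain a (t ++ [a])

@[simp] lemma angleChain_nil (p : V) : angleChain p [] = 0 := rfl

@[simp] lemma angleChain_cons (p b : V) (t : List V) :
    angleChain p (b :: t) = angle p b + angleChain b t := rfl

lemma angleChain_nonneg (p : V) (l : List V) : 0 ≤ angleChain p l := by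
  induction l generalizing p with
  | nil => rfl
  | cons b t ih => exact add_nonneg (angle_nonneg p b) (ih b)

lemma angleChain_append_singleton (p : V) (l : List V) (y : V) :
    angleChain p (l ++ [y]) = angleChain p l + angle (l.getLastD p) y := by
  induction l generalizing p with
  | nil => simp
  | cons b t ih =>
    rw [List.cons_append, angleChain_cons, ih, angleChain_cons, List.getLastD_cons]
    ring

lemma mem_span_singleton_of_angleChain_eq_zero {q : V} {t : List V} (h : angleChain q t = 0) :
    ∀ v ∈ t, v ∈ ℝ ∙ q := by
  induction t generalizing q with
  | nil => simp
  | cons b t ih =>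
    rw [angleChain_cons] at h
    have hqb : angle q b = 0 := by linarith [angle_nonneg q b, angleChain_nonneg b t]
    have hbt : angleChain b t = 0 := by linarith [angle_nonneg q b, angleChain_nonneg b t]
    obtain ⟨-, r, -, rfl⟩ := angle_eq_zero_iff.1 hqb
    rintro v (_ | ⟨_, hv⟩)
    · exact Submodule.smul_mem _ r (Submodule.mem_span_singleton_self q)
    · exact Submodule.span_singleton_smul_le ℝ r q (ih hbt v hv)

lemma totalCurvature_cons (a : V) (l : List V) :
    totalCurvature (a :: l) = angleChain a l + angle (l.getLastD a) a :=
  angleChain_append_singleton a l a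

lemma totalCurvature_cons_cons (a b : V) (t : List V) :
    totalCurvature (a :: b :: t) = angle a b + angleChain b t + angle (t.getLastD b) a := by
  rw [totalCurvature_cons, angleChain_cons, List.getLastD_cons]

lemma totalCurvature_rotate_one (l : List V) :
    totalCurvature (l.rotate 1) = totalCurvature l := by
  rcases l with _ | ⟨a, _ | ⟨b, t⟩⟩
  · rfl
  · rw [List.rotate_singleton]
  · rw [List.rotate_cons_succ, List.rotate_zero, List.cons_append, totalCurvature_cons,
      angleChain_append_singleton, List.getLastD_concat, totalCurvature_cons_cons]
    ring

lemma totalCurvature_rotate (l : List V) (k : ℕ) :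
    totalCurvature (l.rotate k) = totalCurvature l := by
  induction k with
  | zero => rw [List.rotate_zero]
  | succ k ih => rw [← List.rotate_rotate, totalCurvature_rotate_one, ih]

lemma totalCurvature_pair {a b : V} (ha : a ≠ 0) (hab : a + b = 0) :
    totalCurvature [a, b] = 2 * π := by
  rw [eq_neg_of_add_eq_zero_right hab, totalCurvature_cons_cons, angleChain_nil,
    List.getLastD_nil, angle_self_neg_of_nonzero ha, angle_neg_self_of_nonzero ha]
  ring

lemma totalCurvature_of_add_eq_zero {a b q : V} (ha : a ≠ 0) (hab : a + b = 0)
    (hbq : b + q = 0) (t : List V) :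
    totalCurvature (a :: b :: q :: t) = 2 * π + angleChain q t + angle (t.getLastD q) a := by
  have hb : b ≠ 0 := fun hb => ha (by simpa [hb] using hab)
  rw [eq_neg_of_add_eq_zero_right hbq, eq_neg_of_add_eq_zero_right hab] at *
  simp only [totalCurvature_cons_cons, angleChain_cons, List.getLastD_cons,
    angle_self_neg_of_nonzero ha, angle_self_neg_of_nonzero hb]
  ring

lemma totalCurvature_merge_le (a : V) {b : V} (hb : b ≠ 0) (q : V) (t : List V) :
    totalCurvature ((a + b) :: q :: t) ≤ totalCurvature (a :: b :: q :: t) := by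
  simp only [totalCurvature_cons_cons, angleChain_cons, List.getLastD_cons]
  have hsplit := angle_eq_angle_add_add_angle_add a hb
  have h₁ := angle_le_angle_add_angle (t.getLastD q) a (a + b)
  have h₂ := angle_le_angle_add_angle (a + b) b q
  rw [angle_comm b] at hsplit
  linarith

theorem two_pi_le_totalCurvature (l : List V) (hne : l ≠ []) (hl : IsClosedPolygon l) :
    2 * π ≤ totalCurvature l :=
  match l, hne, hl with
  | [a], _, hl => absurd (by simpa using hl.2) (hl.1 a (List.mem_singleton_self a))
  | [a, b], _, hl => (totalCurvature_pair (hl.1 a (by simp)) (by simpa using hl.2)).ge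
  | a :: b :: q :: t, _, hl => by
    rcases exists_rotate_add_ne_zero_or a b q t with ⟨k, a', b', q', t', hrot, hs⟩ | ⟨hab, hbq⟩
    · have hrot' := hl.rotate k
      rw [hrot] at hrot'
      calc 2 * π ≤ totalCurvature ((a' + b') :: q' :: t') :=
            two_pi_le_totalCurvature _ (List.cons_ne_nil _ _) (hrot'.merge hs)
        _ ≤ totalCurvature (a' :: b' :: q' :: t') :=
            totalCurvature_merge_le a' (hrot'.1 b' (by simp)) q' t'
        _ = totalCurvature (a :: b :: q :: t) := by rw [← hrot, totalCurvature_rotate]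
    · rw [totalCurvature_of_add_eq_zero (hl.1 a (by simp)) hab hbq]
      linarith [angleChain_nonneg q t, angle_nonneg (t.getLastD q) a]
termination_by l.length
decreasing_by exact length_merge_lt_of_rotate_eq hrot

lemma isPlanar_of_angleChain_eq_zero {a b q : V} {t : List V}
    (hq : q ∈ Submodule.span ℝ {a, b}) (ht : angleChain q t = 0) :
    IsPlanar (a :: b :: q :: t) := by
  refine ⟨a, b, ?_⟩
  rintro v (_ | ⟨_, _ | ⟨_, _ | ⟨_, hv⟩⟩⟩)
  · exact Submodule.subset_span (by simp)
  · exact Submodule.subset_span (by simp)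
  · exact hq
  · exact (Submodule.span_singleton_le_iff_mem _ _).2 hq
      (mem_span_singleton_of_angleChain_eq_zero ht v hv)

lemma IsPlanar.of_merge {a b q : V} {t : List V} (ha : a ≠ 0) (hb : b ≠ 0)
    (h : totalCurvature (a :: b :: q :: t) = 2 * π)
    (hm : 2 * π ≤ totalCurvature ((a + b) :: q :: t)) (hP : IsPlanar ((a + b) :: q :: t)) :
    IsPlanar (a :: b :: q :: t) := by
  set s := a + b with hs_def
  set p := t.getLastD q
  simp only [totalCurvature_cons_cons, angleChain_cons, List.getLastD_cons] at h hm
  have hsplit := angle_eq_angle_add_add_angle_add a hb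
  rw [← hs_def, angle_comm b] at hsplit
  have h₁ := angle_le_angle_add_angle p a s
  have h₂ := angle_le_angle_add_angle s b q
  have e₁ : angle p s = angle p a + angle a s := by linarith
  have e₂ : angle s q = angle s b + angle b q := by linarith
  by_cases hdeg : angle p s = π ∧ angle s q = π
  · obtain ⟨-, r, -, hq⟩ := angle_eq_pi_iff.1 hdeg.2
    refine isPlanar_of_angleChain_eq_zero ?_ (by linarith)
    exact hq ▸ Submodule.smul_mem _ r
      (add_mem (Submodule.subset_span (by simp)) (Submodule.subset_span (by simp)))
  obtain ⟨x, y, hxy⟩ := hP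
  have hsW : s ∈ Submodule.span ℝ {x, y} := hxy s List.mem_cons_self
  have hqW : q ∈ Submodule.span ℝ {x, y} := hxy q (by simp)
  have hpW : p ∈ Submodule.span ℝ {x, y} :=
    hxy p (List.mem_cons_of_mem _ List.getLastD_mem_cons)
  suffices hW : a ∈ Submodule.span ℝ {x, y} ∧ b ∈ Submodule.span ℝ {x, y} by
    refine ⟨x, y, ?_⟩
    rintro v (_ | ⟨_, _ | ⟨_, hv⟩⟩)
    · exact hW.1
    · exact hW.2
    · exact hxy v (List.mem_cons_of_mem _ hv)
  rcases not_and_or.1 hdeg with hps | hsq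
  · have haW := mem_of_angle_eq_angle_add_angle hpW hsW ha e₁ hps
    exact ⟨haW, add_sub_cancel_left a b ▸ sub_mem hsW haW⟩
  · have hbW := mem_of_angle_eq_angle_add_angle hsW hqW hb e₂ hsq
    exact ⟨add_sub_cancel_right a b ▸ sub_mem hsW hbW, hbW⟩

theorem isPlanar_of_totalCurvature_eq_two_pi (l : List V) (hl : IsClosedPolygon l)
    (h : totalCurvature l = 2 * π) : IsPlanar l :=
  match l, hl, h with
  | [], _, _ => ⟨0, 0, by simp⟩
  | [a], _, _ => ⟨a, a, fun v hv => Submodule.subset_span (by simp_all)⟩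
  | [a, b], _, _ => ⟨a, b, fun v hv => Submodule.subset_span (by simpa using hv)⟩
  | a :: b :: q :: t, hl, h => by
    rcases exists_rotate_add_ne_zero_or a b q t with ⟨k, a', b', q', t', hrot, hs⟩ | ⟨hab, hbq⟩
    · have hrot' := hl.rotate k
      rw [hrot] at hrot'
      have h' : totalCurvature (a' :: b' :: q' :: t') = 2 * π := by
        rw [← hrot, totalCurvature_rotate, h]
      have hm := two_pi_le_totalCurvature _ (List.cons_ne_nil _ _) (hrot'.merge hs)
      have hm' : totalCurvature ((a' + b') :: q' :: t') = 2 * π :=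
        le_antisymm (h' ▸ totalCurvature_merge_le a' (hrot'.1 b' (by simp)) q' t') hm
      have hP := isPlanar_of_totalCurvature_eq_two_pi _ (hrot'.merge hs) hm'
      refine IsPlanar.of_rotate (k := k) ?_
      rw [hrot]
      exact hP.of_merge (hrot'.1 a' (by simp)) (hrot'.1 b' (by simp)) h' hm
    · have ha : a ≠ 0 := hl.1 a (by simp)
      rw [totalCurvature_of_add_eq_zero ha hab hbq] at h
      have hq : q = a := by
        rw [eq_neg_of_add_eq_zero_right hbq, eq_neg_of_add_eq_zero_right hab, neg_neg]
      refine isPlanar_of_angleChain_eq_zero (hq ▸ Submodule.subset_span (by simp)) ?_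
      linarith [angleChain_nonneg q t, angle_nonneg (t.getLastD q) a]
termination_by l.length
decreasing_by exact length_merge_lt_of_rotate_eq hrot

lemma angleChain_map_range (f : ℕ → V) (n : ℕ) :
    angleChain (f 0) ((List.range n).map (fun k => f (k + 1)))
      = ∑ k ∈ Finset.range n, angle (f k) (f (k + 1)) := by
  induction n generalizing f with
  | zero => simp
  | succ n ih =>
    rw [List.range_succ_eq_map, List.map_cons, List.map_map, angleChain_cons,
      Finset.sum_range_succ', add_comm]
    exact congrArg (· + _) (ih (fun k => f (k + 1)))

lemma totalCurvature_map_range (f : ℕ → V) {n : ℕ} (hn : n ≠ 0) (hf : f n = f 0) :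
    totalCurvature ((List.range n).map f) = ∑ k ∈ Finset.range n, angle (f k) (f (k + 1)) := by
  obtain ⟨m, rfl⟩ := Nat.exists_eq_succ_of_ne_zero hn
  rw [List.range_succ_eq_map, List.map_cons, List.map_map, totalCurvature,
    ← angleChain_map_range, List.range_succ, List.map_append, List.map_singleton, hf]
  rfl

theorem exists_sub_mem_span_pair_of_sum_angle_eq_two_pi {n : ℕ} [NeZero n] (C : ZMod n → V)
    (hC : ∀ i, C (i + 1) ≠ C i)
    (htot : ∑ i, angle (C (i + 1) - C i) (C (i + 2) - C (i + 1)) = 2 * π) :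
    ∃ x y : V, ∀ i, C i - C 0 ∈ Submodule.span ℝ {x, y} := by
  set c : ℕ → V := fun k => C k
  set e : ℕ → V := fun k => c (k + 1) - c k
  have hpoly : IsClosedPolygon ((List.range n).map e) := by
    refine ⟨?_, ?_⟩
    · simp only [List.mem_map]
      rintro _ ⟨k, -, rfl⟩
      simpa [e, c, sub_eq_zero] using hC k
    · rw [← Multiset.sum_coe, ← Multiset.map_coe, ← Multiset.range, ← Finset.range_val,
        ← Finset.sum_eq_multiset_sum, Finset.sum_range_sub, sub_eq_zero]
      simp [c]
  have hcurv : totalCurvature ((List.range n).map e) = 2 * π := by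
    rw [totalCurvature_map_range e (NeZero.ne n) (by simp [e, c]), ← htot,
      ZMod.sum_eq_sum_range]
    refine Finset.sum_congr rfl fun k _ => ?_
    simp only [e, c]
    push_cast
    ring_nf
  obtain ⟨x, y, hxy⟩ := isPlanar_of_totalCurvature_eq_two_pi _ hpoly hcurv
  refine ⟨x, y, fun i => ?_⟩
  have hi : C i - C 0 = ∑ k ∈ Finset.range i.val, e k := by
    rw [Finset.sum_range_sub]
    simp [c]
  rw [hi]
  exact Submodule.sum_mem _ fun k hk => hxy _ (List.mem_map_of_mem
    (List.mem_range.2 ((Finset.mem_range.1 hk).trans i.val_lt)))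

end Fenchel

theorem fenchel_equality_planar_general
    (n : ℕ) [NeZero n]
    (C : ZMod n → EuclideanSpace ℝ (Fin 3))
    (hC : ∀ i : ZMod n, C (i + 1) ≠ C i)
    (htot : ∑ i : ZMod n,
        InnerProductGeometry.angle (C (i + 1) - C i) (C (i + 2) - C (i + 1))
      = 2 * Real.pi) :
    ∃ A : AffineSubspace ℝ (EuclideanSpace ℝ (Fin 3)),
      Module.finrank ℝ A.direction ≤ 2 ∧ ∀ i : ZMod n, C i ∈ A := by
  obtain ⟨x, y, hxy⟩ := Fenchel.exists_sub_mem_span_pair_of_sum_angle_eq_two_pi C hC htot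
  refine ⟨AffineSubspace.mk' (C 0) (Submodule.span ℝ {x, y}), ?_,
    fun i => AffineSubspace.mem_mk'.2 (hxy i)⟩
  rw [AffineSubspace.direction_mk']
  exact finrank_span_pair_le x y

/-- Equality case of Fenchel's theorem, necessity of planarity: a closed space polygon
with total curvature exactly `2π` lies in an affine subspace of dimension at most 2. -/
theorem fenchel_equality_planar
    (n : ℕ) [NeZero n] (hn : 3 ≤ n)
    (C : ZMod n → EuclideanSpace ℝ (Fin 3))
    (hC : ∀ i : ZMod n, C (i + 1) ≠ C i)
    (htot : ∑ i : ZMod n,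
        InnerProductGeometry.angle (C (i + 1) - C i) (C (i + 2) - C (i + 1))
      = 2 * Real.pi) :
    ∃ A : AffineSubspace ℝ (EuclideanSpace ℝ (Fin 3)),
      Module.finrank ℝ A.direction ≤ 2 ∧ ∀ i : ZMod n, C i ∈ A :=
  fenchel_equality_planar_general n C hC htot
end
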